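/- arXiv:2106.06574 — 6 statements merged into one kernel-verified Lean document; each statement's English description precedes it below -/
import Mathlib

section
/- (Theorem 1, robust strict saddle property for r = 1.) Let M be an N×N real symmetric matrix with eigenvalues λ₁ > λ₂ ≥ λ₃ ≥ ⋯ ≥ λ_N. Set ε = 0.2(λ₁ − λ₂) and η = 0.3(λ₁ − λ₂). Then for every unit vector x ∈ ℝ^N with ‖grad g(x)‖₂ = ‖(x xᵀ − I_N) M x‖₂ ≤ ε, one has |λ_min(hess g(x))| ≥ η; that is, either (xᵀ M x)‖u‖₂² − uᵀ M u ≥ η ‖u‖₂² for all u with xᵀ u = 0, or there exists a unit vector u with xᵀ u = 0 such that (xᵀ M x) − uᵀ M u ≤ −η. -/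
/-! With `λ₁ = lam 0` and `λ₂ = lam 1`, write `a i = v i ⬝ᵥ x` for the coordinates of `x` in
the eigenbasis, `s = (a 0)²`, `ρ = xᵀ M x` and `δ = λ₁ - λ₂`. Then `λ₁ - ρ ≥ (1 - s) δ`, and the
gradient, whose coordinates are `(ρ - λᵢ) aᵢ`, gives `s (λ₁ - ρ)² ≤ (0.2 δ)²`.
If `s ≤ 0.35`, the projection of the top eigenvector onto the tangent space has Hessian value
`(ρ - λ₁)(1 - 2s)/(1 - s) ≤ -0.3 δ`. If `s > 0.35`, the two bounds force `λ₁ - ρ ≤ (s - 0.3) δ`,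
while by Cauchy–Schwarz a tangent vector `u` has squared top coordinate at most `(1 - s)‖u‖²`,
so `uᵀ M u ≤ λ₂ ‖u‖² + (1 - s) δ ‖u‖²` and the Hessian form is at least `0.3 δ ‖u‖²`. -/

open Matrix Finset

lemma sum_sq_eq_dotProduct_self {ι : Type*} [Fintype ι] (x : ι → ℝ) : ∑ i, x i ^ 2 = x ⬝ᵥ x := by
  simp only [dotProduct, sq]

lemma sum_mul_sq_le_of_le_of_ne {ι : Type*} [Fintype ι] [DecidableEq ι] {lam : ι → ℝ} {i0 : ι}
    {μ : ℝ} (hlam : ∀ i, i ≠ i0 → lam i ≤ μ) (c : ι → ℝ) :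
    ∑ i, lam i * c i ^ 2 ≤ lam i0 * c i0 ^ 2 + μ * (∑ i, c i ^ 2 - c i0 ^ 2) := by
  rw [← add_sum_erase _ _ (mem_univ i0), ← add_sum_erase _ (fun i => c i ^ 2) (mem_univ i0),
    add_sub_cancel_left, mul_sum]
  gcongr with i hi
  exact hlam i (ne_of_mem_erase hi)

lemma sq_le_one_sub_sq_mul_sum_sq_of_sum_mul_eq_zero {ι : Type*} [Fintype ι] [DecidableEq ι]
    {a c : ι → ℝ} (i0 : ι) (ha : ∑ i, a i ^ 2 = 1) (hac : ∑ i, a i * c i = 0) :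
    c i0 ^ 2 ≤ (1 - a i0 ^ 2) * ∑ i, c i ^ 2 := by
  have hCS := sum_mul_sq_le_sq_mul_sq (univ.erase i0) a c
  rw [← add_sum_erase _ _ (mem_univ i0)] at ha hac
  rw [← add_sum_erase _ (fun i => c i ^ 2) (mem_univ i0)]
  rw [eq_neg_of_add_eq_zero_right hac, eq_sub_of_add_eq' ha] at hCS
  nlinarith

lemma le_sub_mul_of_sq_mul_sq_le {s t δ : ℝ} (hδ : 0 < δ) (hs : 0.35 ≤ s)
    (ht : (1 - s) * δ ≤ t) (hst : s * t ^ 2 ≤ (0.2 * δ) ^ 2) : t ≤ (s - 0.3) * δ := by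
  nlinarith [sq_nonneg (t - 0.2 * δ), sq_nonneg (s - 0.8), mul_pos hδ hδ]

lemma vecMulVec_self_sub_one_mulVec {ι : Type*} [Fintype ι] [DecidableEq ι] (x m : ι → ℝ) :
    (vecMulVec x x - 1) *ᵥ m = (x ⬝ᵥ m) • x - m := by
  rw [sub_mulVec, one_mulVec, vecMulVec_mulVec, op_smul_eq_smul]

lemma exists_unit_tangent_of_hessian_le {ι : Type*} [Fintype ι] {M : Matrix ι ι ℝ}
    {x w : ι → ℝ} {η : ℝ} (hw : 0 < w ⬝ᵥ w) (hxw : x ⬝ᵥ w = 0)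
    (h : (x ⬝ᵥ (M *ᵥ x)) * (w ⬝ᵥ w) - w ⬝ᵥ (M *ᵥ w) ≤ -η * (w ⬝ᵥ w)) :
    ∃ u : ι → ℝ, √(∑ i, u i ^ 2) = 1 ∧ x ⬝ᵥ u = 0 ∧
      x ⬝ᵥ (M *ᵥ x) - u ⬝ᵥ (M *ᵥ u) ≤ -η := by
  set r := w ⬝ᵥ w
  have hc : (√r)⁻¹ ^ 2 = r⁻¹ := by rw [inv_pow, Real.sq_sqrt hw.le]
  refine ⟨(√r)⁻¹ • w, ?_, ?_, ?_⟩
  · rw [sum_sq_eq_dotProduct_self, dotProduct_smul, smul_dotProduct, smul_smul, ← sq, hc,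
      smul_eq_mul, inv_mul_cancel₀ hw.ne', Real.sqrt_one]
  · rw [dotProduct_smul, hxw, smul_zero]
  · rw [mulVec_smul, dotProduct_smul, smul_dotProduct, smul_smul, ← sq, hc, smul_eq_mul]
    calc x ⬝ᵥ (M *ᵥ x) - r⁻¹ * w ⬝ᵥ (M *ᵥ w)
        = r⁻¹ * ((x ⬝ᵥ (M *ᵥ x)) * r - w ⬝ᵥ (M *ᵥ w)) := by field_simp
      _ ≤ r⁻¹ * (-η * r) := by gcongr
      _ = -η := by field_simp

section Orthonormal

variable {ι : Type*} [Fintype ι] [DecidableEq ι] {v : ι → ι → ℝ}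

lemma eq_sum_dotProduct_smul_of_orthonormal
    (horth : ∀ i j, v i ⬝ᵥ v j = if i = j then 1 else 0) (z : ι → ℝ) :
    z = ∑ i, (v i ⬝ᵥ z) • v i := by
  have hVVt : of v * (of v)ᵀ = 1 := by
    ext i j
    simpa [mul_apply, one_apply, dotProduct] using horth i j
  calc z = ((of v)ᵀ * of v) *ᵥ z := by rw [mul_eq_one_comm.mp hVVt, one_mulVec]
    _ = ∑ i, (v i ⬝ᵥ z) • v i := by rw [← mulVec_mulVec, mulVec_transpose, vecMul_eq_sum]; rfl

lemma dotProduct_eq_sum_of_orthonormal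
    (horth : ∀ i j, v i ⬝ᵥ v j = if i = j then 1 else 0) (y z : ι → ℝ) :
    y ⬝ᵥ z = ∑ i, (v i ⬝ᵥ y) * (v i ⬝ᵥ z) := by
  conv_lhs => rw [eq_sum_dotProduct_smul_of_orthonormal horth z]
  rw [dotProduct_sum]
  exact sum_congr rfl fun i _ => by rw [dotProduct_smul, smul_eq_mul, dotProduct_comm y, mul_comm]

variable {M : Matrix ι ι ℝ} {lam : ι → ℝ}

lemma dotProduct_mulVec_of_orthonormal_eigenvectors
    (horth : ∀ i j, v i ⬝ᵥ v j = if i = j then 1 else 0)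
    (heig : ∀ i, M *ᵥ v i = lam i • v i) (i : ι) (z : ι → ℝ) :
    v i ⬝ᵥ (M *ᵥ z) = lam i * (v i ⬝ᵥ z) := by
  conv_lhs => rw [eq_sum_dotProduct_smul_of_orthonormal horth z]
  simp only [mulVec_sum, mulVec_smul, heig, smul_smul, dotProduct_sum, dotProduct_smul, horth,
    smul_eq_mul, mul_ite, mul_one, mul_zero, sum_ite_eq, mem_univ, if_true]
  ring

lemma dotProduct_mulVec_eq_sum_of_orthonormal_eigenvectors
    (horth : ∀ i j, v i ⬝ᵥ v j = if i = j then 1 else 0)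
    (heig : ∀ i, M *ᵥ v i = lam i • v i) (y z : ι → ℝ) :
    y ⬝ᵥ (M *ᵥ z) = ∑ i, lam i * ((v i ⬝ᵥ y) * (v i ⬝ᵥ z)) := by
  rw [dotProduct_eq_sum_of_orthonormal horth]
  exact sum_congr rfl fun i _ => by
    rw [dotProduct_mulVec_of_orthonormal_eigenvectors horth heig]; ring

lemma sq_mul_sq_sub_le_sum_sq_grad
    (horth : ∀ i j, v i ⬝ᵥ v j = if i = j then 1 else 0)
    (heig : ∀ i, M *ᵥ v i = lam i • v i) (i : ι) (x : ι → ℝ) :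
    (v i ⬝ᵥ x) ^ 2 * (lam i - x ⬝ᵥ (M *ᵥ x)) ^ 2 ≤
      ∑ j, ((vecMulVec x x - 1) *ᵥ (M *ᵥ x)) j ^ 2 := by
  have hg : v i ⬝ᵥ ((vecMulVec x x - 1) *ᵥ (M *ᵥ x)) =
      (x ⬝ᵥ (M *ᵥ x) - lam i) * (v i ⬝ᵥ x) := by
    rw [vecMulVec_self_sub_one_mulVec, dotProduct_sub, dotProduct_smul, smul_eq_mul,
      dotProduct_mulVec_of_orthonormal_eigenvectors horth heig]
    ring
  set g := (vecMulVec x x - 1) *ᵥ (M *ᵥ x)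
  calc (v i ⬝ᵥ x) ^ 2 * (lam i - x ⬝ᵥ (M *ᵥ x)) ^ 2 = (v i ⬝ᵥ g) * (v i ⬝ᵥ g) := by
        rw [hg]; ring
    _ ≤ ∑ j, (v j ⬝ᵥ g) * (v j ⬝ᵥ g) :=
        single_le_sum (fun j _ => mul_self_nonneg (v j ⬝ᵥ g)) (mem_univ i)
    _ = ∑ j, g j ^ 2 := by rw [sum_sq_eq_dotProduct_self, dotProduct_eq_sum_of_orthonormal horth]

variable {i0 : ι} {μ : ℝ} {x : ι → ℝ}

lemma sum_sq_dotProduct_of_orthonormal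
    (horth : ∀ i j, v i ⬝ᵥ v j = if i = j then 1 else 0) (y : ι → ℝ) :
    ∑ i, (v i ⬝ᵥ y) ^ 2 = ∑ i, y i ^ 2 := by
  rw [sum_sq_eq_dotProduct_self y, dotProduct_eq_sum_of_orthonormal horth y y]
  simp only [sq]

lemma one_sub_sq_mul_sub_le_sub_dotProduct_mulVec
    (horth : ∀ i j, v i ⬝ᵥ v j = if i = j then 1 else 0)
    (heig : ∀ i, M *ᵥ v i = lam i • v i) (hlam : ∀ i, i ≠ i0 → lam i ≤ μ) (hx : x ⬝ᵥ x = 1) :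
    (1 - (v i0 ⬝ᵥ x) ^ 2) * (lam i0 - μ) ≤ lam i0 - x ⬝ᵥ (M *ᵥ x) := by
  have hsum : ∑ i, (v i ⬝ᵥ x) ^ 2 = 1 := by
    rw [sum_sq_dotProduct_of_orthonormal horth, sum_sq_eq_dotProduct_self, hx]
  have hρ : x ⬝ᵥ (M *ᵥ x) = ∑ i, lam i * (v i ⬝ᵥ x) ^ 2 := by
    simp only [dotProduct_mulVec_eq_sum_of_orthonormal_eigenvectors horth heig, sq]
  have hle := sum_mul_sq_le_of_le_of_ne hlam (fun i => v i ⬝ᵥ x)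
  rw [hsum] at hle
  linarith

lemma exists_unit_tangent_hessian_le_neg_of_sq_dotProduct_le
    (horth : ∀ i j, v i ⬝ᵥ v j = if i = j then 1 else 0)
    (heig : ∀ i, M *ᵥ v i = lam i • v i) (hlam : ∀ i, i ≠ i0 → lam i ≤ μ) (hμ : μ ≤ lam i0)
    (hx : x ⬝ᵥ x = 1) (hs : (v i0 ⬝ᵥ x) ^ 2 ≤ 0.35) :
    ∃ u : ι → ℝ, √(∑ i, u i ^ 2) = 1 ∧ x ⬝ᵥ u = 0 ∧
      x ⬝ᵥ (M *ᵥ x) - u ⬝ᵥ (M *ᵥ u) ≤ -(0.3 * (lam i0 - μ)) := by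
  have hρ := one_sub_sq_mul_sub_le_sub_dotProduct_mulVec horth heig hlam hx
  set α := v i0 ⬝ᵥ x
  set ρ := x ⬝ᵥ (M *ᵥ x)
  have hvv : v i0 ⬝ᵥ v i0 = 1 := by simp [horth]
  have hxv : x ⬝ᵥ v i0 = α := dotProduct_comm _ _
  have hvMx : v i0 ⬝ᵥ (M *ᵥ x) = lam i0 * α :=
    dotProduct_mulVec_of_orthonormal_eigenvectors horth heig i0 x
  have hxMv : x ⬝ᵥ (M *ᵥ v i0) = lam i0 * α := by
    rw [heig, dotProduct_smul, hxv, smul_eq_mul]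
  have hvMv : v i0 ⬝ᵥ (M *ᵥ v i0) = lam i0 := by
    rw [heig, dotProduct_smul, hvv, smul_eq_mul, mul_one]
  set w := v i0 - α • x
  have hww : w ⬝ᵥ w = 1 - α ^ 2 := by
    simp only [w, dotProduct_sub, sub_dotProduct, dotProduct_smul, smul_dotProduct, smul_eq_mul,
      hvv, hxv, hx]
    ring
  have hxw : x ⬝ᵥ w = 0 := by
    simp only [w, dotProduct_sub, dotProduct_smul, smul_eq_mul, hxv, hx]
    ring
  have hwMw : w ⬝ᵥ (M *ᵥ w) = lam i0 * (1 - 2 * α ^ 2) + α ^ 2 * ρ := by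
    simp only [w, mulVec_sub, mulVec_smul, dotProduct_sub, sub_dotProduct, dotProduct_smul,
      smul_dotProduct, smul_eq_mul, hvMv, hvMx, hxMv]
    ring
  refine exists_unit_tangent_of_hessian_le (by rw [hww]; linarith) hxw ?_
  rw [hww, hwMw]
  nlinarith [mul_le_mul_of_nonneg_right hρ (by linarith : (0 : ℝ) ≤ 1 - 2 * α ^ 2),
    mul_nonneg (mul_nonneg (sub_nonneg.mpr hμ) (by linarith : (0 : ℝ) ≤ 1 - α ^ 2))
      (by linarith : (0 : ℝ) ≤ 0.7 - 2 * α ^ 2)]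

lemma le_hessian_of_le_sq_dotProduct
    (horth : ∀ i j, v i ⬝ᵥ v j = if i = j then 1 else 0)
    (heig : ∀ i, M *ᵥ v i = lam i • v i) (hlam : ∀ i, i ≠ i0 → lam i ≤ μ) (hμ : μ < lam i0)
    (hx : x ⬝ᵥ x = 1) (hs : 0.35 ≤ (v i0 ⬝ᵥ x) ^ 2)
    (hgrad : (v i0 ⬝ᵥ x) ^ 2 * (lam i0 - x ⬝ᵥ (M *ᵥ x)) ^ 2 ≤ (0.2 * (lam i0 - μ)) ^ 2)
    (u : ι → ℝ) (hu : x ⬝ᵥ u = 0) :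
    x ⬝ᵥ (M *ᵥ x) * ∑ i, u i ^ 2 - u ⬝ᵥ (M *ᵥ u) ≥ 0.3 * (lam i0 - μ) * ∑ i, u i ^ 2 := by
  have hρ : lam i0 - x ⬝ᵥ (M *ᵥ x) ≤ ((v i0 ⬝ᵥ x) ^ 2 - 0.3) * (lam i0 - μ) :=
    le_sub_mul_of_sq_mul_sq_le (sub_pos.mpr hμ) hs
      (one_sub_sq_mul_sub_le_sub_dotProduct_mulVec horth heig hlam hx) hgrad
  have hc : (v i0 ⬝ᵥ u) ^ 2 ≤ (1 - (v i0 ⬝ᵥ x) ^ 2) * ∑ i, u i ^ 2 := by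
    rw [← sum_sq_dotProduct_of_orthonormal horth u]
    refine sq_le_one_sub_sq_mul_sum_sq_of_sum_mul_eq_zero (a := fun i => v i ⬝ᵥ x)
      (c := fun i => v i ⬝ᵥ u) i0 ?_ ?_
    · rw [sum_sq_dotProduct_of_orthonormal horth, sum_sq_eq_dotProduct_self, hx]
    · rw [← dotProduct_eq_sum_of_orthonormal horth, hu]
  have huMu : u ⬝ᵥ (M *ᵥ u) ≤
      lam i0 * (v i0 ⬝ᵥ u) ^ 2 + μ * (∑ i, u i ^ 2 - (v i0 ⬝ᵥ u) ^ 2) := by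
    rw [← sum_sq_dotProduct_of_orthonormal horth u,
      dotProduct_mulVec_eq_sum_of_orthonormal_eigenvectors horth heig]
    simpa only [sq] using sum_mul_sq_le_of_le_of_ne hlam (fun i => v i ⬝ᵥ u)
  nlinarith [mul_le_mul_of_nonneg_right hρ (by positivity : (0 : ℝ) ≤ ∑ i, u i ^ 2),
    mul_le_mul_of_nonneg_left hc (sub_pos.mpr hμ).le]

end Orthonormal

/-- Theorem 1: robust strict saddle property for `r = 1`. With
`ε = 0.2 (λ₁ − λ₂)` and `η = 0.3 (λ₁ − λ₂)`, every unit vector `x` with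
`‖(x xᵀ − I) M x‖₂ ≤ ε` satisfies `|λ_min(hess g(x))| ≥ η`: either the Hessian
quadratic form `(xᵀ M x)‖u‖² − uᵀ M u` is `≥ η ‖u‖²` on all tangent vectors `u`,
or it is `≤ −η` at some unit tangent vector. -/
theorem stmt_3 {N : ℕ} (hN : 1 < N) (M : Matrix (Fin N) (Fin N) ℝ)
    (lam : Fin N → ℝ) (v : Fin N → Fin N → ℝ)
    (horth : ∀ i j : Fin N, v i ⬝ᵥ v j = if i = j then 1 else 0)
    (heig : ∀ i : Fin N, M *ᵥ v i = lam i • v i)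
    (hmono : ∀ i j : Fin N, i ≤ j → lam j ≤ lam i)
    (hgap : lam ⟨1, hN⟩ < lam ⟨0, by omega⟩) :
    ∀ x : Fin N → ℝ, Real.sqrt (∑ i, x i ^ 2) = 1 →
      Real.sqrt (∑ i, (((vecMulVec x x - 1) *ᵥ (M *ᵥ x)) i) ^ 2) ≤
        0.2 * (lam ⟨0, by omega⟩ - lam ⟨1, hN⟩) →
      ((∀ u : Fin N → ℝ, x ⬝ᵥ u = 0 →
          (x ⬝ᵥ (M *ᵥ x)) * (∑ i, u i ^ 2) - u ⬝ᵥ (M *ᵥ u) ≥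
            0.3 * (lam ⟨0, by omega⟩ - lam ⟨1, hN⟩) * ∑ i, u i ^ 2) ∨
        (∃ u : Fin N → ℝ, Real.sqrt (∑ i, u i ^ 2) = 1 ∧ x ⬝ᵥ u = 0 ∧
          (x ⬝ᵥ (M *ᵥ x)) - u ⬝ᵥ (M *ᵥ u) ≤
            -(0.3 * (lam ⟨0, by omega⟩ - lam ⟨1, hN⟩)))) := by
  intro x hx hgrad
  set i0 : Fin N := ⟨0, by omega⟩
  have hlam : ∀ i, i ≠ i0 → lam i ≤ lam ⟨1, hN⟩ := fun i hi =>
    hmono _ _ (Fin.le_def.mpr (Nat.one_le_iff_ne_zero.mpr (Fin.val_ne_iff.mpr hi)))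
  have hxx : x ⬝ᵥ x = 1 := by rwa [← sum_sq_eq_dotProduct_self, ← Real.sqrt_eq_one]
  rcases le_or_gt ((v i0 ⬝ᵥ x) ^ 2) 0.35 with hs | hs
  · exact Or.inr
      (exists_unit_tangent_hessian_le_neg_of_sq_dotProduct_le horth heig hlam hgap.le hxx hs)
  · refine Or.inl (le_hessian_of_le_sq_dotProduct horth heig hlam hgap hxx hs.le ?_)
    exact (sq_mul_sq_sub_le_sum_sq_grad horth heig i0 x).trans
      ((Real.sqrt_le_left (by linarith)).mp hgrad)
end

section
/- (Theorem 2, Case 1: global minimizer.) Let M be an N×N real symmetric matrix with eigenvalues λ₁ > λ₂ > ⋯ > λ_r > λ_{r+1} ≥ ⋯ ≥ λ_N and d_min = min_{1 ≤ s < j ≤ r+1} (λ_s − λ_j). Let X_Ω = [v₁, …, v_r] ∈ ℝ^{N×r} whose j-th column is a unit eigenvector of M with eigenvalue λ_j (so Ω = {1, …, r} in order). Then for every U in the tangent space T_{X_Ω} = {U : X_Ωᵀ U + Uᵀ X_Ω = 0}, hess g(X_Ω)[U,U] = ⟨X_Ωᵀ M X_Ω, Uᵀ U N_r⟩ − ⟨M,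 U N_r Uᵀ⟩ ≥ (1/2) d_min ‖U‖_F²; in particular λ_min(hess g(X_Ω)) ≥ (1/2) d_min and X_Ω is a global minimizer of g on the Stiefel manifold. -/
/-
Writing `M = V Λ Vᵀ` with `V` orthogonal, both claims are invariant under `U ↦ Vᵀ U`, so we may
take `M = Λ` diagonal and `X_Ω = [e₁, …, e_r]`. Then
`hess g(X_Ω)[A, A] = ∑_{k,p} w_p (λ_p - λ_k) A_{kp}²`, where `w_p = r + 1 - p ≥ 1` are the
diagonal entries of `N_r`. For rows `k > r` each coefficient is at least `λ_p - λ_{r+1} ≥ d_min`.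
On the top `r × r` block tangency makes `A` skew, so the entries `(k, p)` and `(p, k)` pair up
with combined coefficient `(k - p)(λ_p - λ_k) ≥ d_min`; this pairing is where the factor `1/2`
comes from.

For global optimality, the squared entries `B_{kp}²` of `B = Vᵀ Z` form a doubly substochastic
array. Writing `w_p = #{t | p ≤ t ≤ r}` splits `tr(Zᵀ M Z N_r)` into sums `∑_k λ_k T_k` with
`0 ≤ T_k ≤ 1` and `∑_k T_k = t`, and each of these is at most `λ_1 + ⋯ + λ_t` because `λ` is
nonincreasing.
-/

open Matrix

/-- The diagonal weight matrix `N_r = diag(r, r−1, …, 1)`. -/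
noncomputable def Nr (r : ℕ) : Matrix (Fin r) (Fin r) ℝ :=
  Matrix.diagonal fun j => (r : ℝ) - (j : ℕ)

/-- The trace inner product `⟨A, B⟩ = ∑_{ij} A_{ij} B_{ij}`. -/
def tip {m n : ℕ} (A B : Matrix (Fin m) (Fin n) ℝ) : ℝ :=
  ∑ i, ∑ j, A i j * B i j

/-- `d_min = min_{1 ≤ s < j ≤ r+1} (λ_s − λ_j)` (0-based: `0 ≤ s < j ≤ r`). -/
noncomputable def dmin {N : ℕ} (lam : Fin N → ℝ) (r : ℕ) : ℝ :=
  sInf {d : ℝ | ∃ s j : Fin N, (s : ℕ) < (j : ℕ) ∧ (j : ℕ) ≤ r ∧ d = lam s - lam j}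

open Finset

theorem sum_mul_le_sum_of_threshold {ι : Type*} [Fintype ι] [DecidableEq ι]
    (lam T : ι → ℝ) (s : Finset ι) (c : ℝ)
    (hs : ∀ k ∈ s, c ≤ lam k) (hsc : ∀ k ∉ s, lam k ≤ c)
    (hT0 : ∀ k, 0 ≤ T k) (hT1 : ∀ k, T k ≤ 1) (hT : ∑ k, T k = #s) :
    ∑ k, lam k * T k ≤ ∑ k ∈ s, lam k := by
  have hterm : ∀ k, 0 ≤ (lam k - c) * ((if k ∈ s then 1 else 0) - T k) := by
    intro k
    by_cases hk : k ∈ s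
    · simp only [hk, if_true]
      exact mul_nonneg (by linarith [hs k hk]) (by linarith [hT1 k])
    · simp only [hk, if_false]
      exact mul_nonneg_of_nonpos_of_nonpos (by linarith [hsc k hk]) (by linarith [hT0 k])
  have hexpand : ∑ k, (lam k - c) * ((if k ∈ s then 1 else 0) - T k)
      = (∑ k ∈ s, lam k - ∑ k, lam k * T k) - c * (#s - ∑ k, T k) := by
    simp only [sub_mul, mul_sub, mul_ite, mul_one, mul_zero, sum_sub_distrib, ← mul_sum,
      sum_ite_mem, univ_inter, sum_const, nsmul_eq_mul]
    ring
  linarith [sum_nonneg fun k (_ : k ∈ univ) => hterm k, hT ▸ hexpand]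

theorem half_mul_sum_le_sum_mul_of_symm {ι : Type*} [Fintype ι] (c B : ι → ι → ℝ) (d : ℝ)
    (hB : ∀ p q, B p q = B q p) (hB0 : ∀ p q, 0 ≤ B p q) (hdiag : ∀ p, B p p = 0)
    (hc : ∀ p q, p ≠ q → d ≤ c p q + c q p) :
    1 / 2 * d * ∑ p, ∑ q, B p q ≤ ∑ p, ∑ q, c p q * B p q := by
  have hswap : ∑ p, ∑ q, c p q * B p q = ∑ p, ∑ q, c q p * B p q := by
    rw [sum_comm]
    simp only [hB]
  have hterm : ∀ p q, d * B p q ≤ (c p q + c q p) * B p q := by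
    intro p q
    rcases eq_or_ne p q with rfl | hpq
    · simp [hdiag]
    · exact mul_le_mul_of_nonneg_right (hc p q hpq) (hB0 p q)
  have hsum : d * ∑ p, ∑ q, B p q ≤ 2 * ∑ p, ∑ q, c p q * B p q := by
    calc d * ∑ p, ∑ q, B p q = ∑ p, ∑ q, d * B p q := by simp only [mul_sum]
      _ ≤ ∑ p, ∑ q, (c p q + c q p) * B p q := 
          sum_le_sum fun p _ => sum_le_sum fun q _ => hterm p q
      _ = 2 * ∑ p, ∑ q, c p q * B p q := by
        rw [two_mul]
        nth_rewrite 2 [hswap]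
        simp only [add_mul, sum_add_distrib]
  linarith

theorem Fin.sum_univ_eq_sum_castLE_add_sum_compl {M : Type*} [AddCommMonoid M] {N r : ℕ}
    (h : r ≤ N) (f : Fin N → M) :
    ∑ k, f k = ∑ q : Fin r, f (Fin.castLE h q) +
      ∑ k ∈ (univ.map (Fin.castLEEmb h))ᶜ, f k := by
  rw [← sum_add_sum_compl (univ.map (Fin.castLEEmb h)), sum_map]
  rfl

theorem Fin.le_of_mem_compl_map_castLEEmb {N r : ℕ} (h : r ≤ N) {k : Fin N}
    (hk : k ∈ (univ.map (Fin.castLEEmb h))ᶜ) : r ≤ k := by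
  by_contra! hlt
  simp only [mem_compl, mem_map, mem_univ, true_and, not_exists] at hk
  exact hk ⟨k, hlt⟩ rfl

theorem antitone_of_strictAnti_head_of_antitone_tail {N r : ℕ} (hrN : r < N) (lam : Fin N → ℝ)
    (hstrict : ∀ s j : Fin N, (s : ℕ) < (j : ℕ) → (j : ℕ) ≤ r → lam j < lam s)
    (hmono : ∀ s j : Fin N, r ≤ (s : ℕ) → s ≤ j → lam j ≤ lam s) :
    Antitone lam := by
  intro s j hsj
  rcases hsj.eq_or_lt with rfl | hlt
  · rfl
  by_cases hj : (j : ℕ) ≤ r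
  · exact (hstrict s j hlt hj).le
  by_cases hs : r ≤ (s : ℕ)
  · exact hmono s j hs hsj
  have h1 := hmono ⟨r, hrN⟩ j le_rfl (Fin.le_def.mpr (by simp; omega))
  have h2 := hstrict s ⟨r, hrN⟩ (by simp; omega) le_rfl
  linarith

theorem dmin_le_sub {N : ℕ} (lam : Fin N → ℝ) (r : ℕ) {s j : Fin N}
    (hsj : (s : ℕ) < (j : ℕ)) (hjr : (j : ℕ) ≤ r) : dmin lam r ≤ lam s - lam j := by
  refine csInf_le ?_ ⟨s, j, hsj, hjr, rfl⟩
  refine ((Set.finite_range fun p : Fin N × Fin N => lam p.1 - lam p.2).subset ?_).bddBelow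
  rintro _ ⟨s', j', -, -, rfl⟩
  exact ⟨(s', j'), rfl⟩

theorem half_mul_sum_sq_le_sum_gap_mul_sq {N r : ℕ} (h : r < N) (lam : Fin N → ℝ)
    (hanti : Antitone lam) (d : ℝ)
    (hgap : ∀ s j : Fin N, (s : ℕ) < (j : ℕ) → (j : ℕ) ≤ r → d ≤ lam s - lam j)
    (A : Matrix (Fin N) (Fin r) ℝ)
    (hA : ∀ p q : Fin r, A (Fin.castLE h.le p) q = -A (Fin.castLE h.le q) p) :
    1 / 2 * d * ∑ k, ∑ p, A k p ^ 2 ≤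
      ∑ k, ∑ p : Fin r, ((r : ℝ) - p) * (lam (Fin.castLE h.le p) - lam k) * A k p ^ 2 := by
  set e := Fin.castLE h.le
  have hone : ∀ {a b : ℕ}, a < b → (1 : ℝ) ≤ b - a := fun {a b} hab => by
    have : (a : ℝ) + 1 ≤ b := by exact_mod_cast hab
    linarith
  have hpair : ∀ p q : Fin r, (p : ℕ) < q → d ≤ ((q : ℝ) - p) * (lam (e p) - lam (e q)) :=
    fun p q hpq => (hgap (e p) (e q) hpq (by simp [e])).trans
      (le_mul_of_one_le_left (sub_nonneg.mpr (hanti hpq.le)) (hone hpq))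
  have htail : ∀ (p : Fin r) (k : Fin N), r ≤ k →
      1 / 2 * d ≤ ((r : ℝ) - p) * (lam (e p) - lam k) := by
    intro p k hk
    have hpk : lam k ≤ lam (e p) := hanti (Fin.le_def.mpr (by simp [e]; omega))
    have hdk : d ≤ lam (e p) - lam k :=
      (hgap (e p) ⟨r, h⟩ (by simp [e]) le_rfl).trans
        (by linarith [hanti (Fin.le_def.mpr hk : (⟨r, h⟩ : Fin N) ≤ k)])
    have := le_mul_of_one_le_left (sub_nonneg.mpr hpk) (hone p.isLt)
    linarith [sub_nonneg.mpr hpk]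
  rw [Fin.sum_univ_eq_sum_castLE_add_sum_compl h.le, Fin.sum_univ_eq_sum_castLE_add_sum_compl h.le,
    mul_add]
  apply add_le_add
  · refine half_mul_sum_le_sum_mul_of_symm
      (fun q p => ((r : ℝ) - p) * (lam (e p) - lam (e q))) (fun q p => A (e q) p ^ 2) d
      (fun q p => by simp only [hA q p, neg_sq]) (fun _ _ => sq_nonneg _)
      (fun p => by simp [show A (e p) p = 0 by linarith [hA p p]])
      (fun q p hqp => ?_)
    rcases lt_or_gt_of_ne (Fin.val_ne_of_ne hqp) with hlt | hlt
    · linarith [hpair q p hlt]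
    · linarith [hpair p q hlt]
  · simp only [mul_sum]
    exact sum_le_sum fun k hk => sum_le_sum fun p _ => mul_le_mul_of_nonneg_right
      (htail p k (Fin.le_of_mem_compl_map_castLEEmb h.le hk)) (sq_nonneg _)

theorem sum_card_Ici_mul_eq_sum_sum_Iic {ι R : Type*} [Fintype ι] [Preorder ι]
    [LocallyFiniteOrderTop ι] [LocallyFiniteOrderBot ι] [NonAssocSemiring R]
    (F : ι → R) : ∑ p, (#(Ici p) : R) * F p = ∑ t, ∑ p ∈ Iic t, F p := by
  simp only [card_eq_sum_ones, Nat.cast_sum, Nat.cast_one, sum_mul, one_mul]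
  exact sum_comm' fun p t => by simp

theorem sum_weight_mul_le_of_antitone_of_substochastic {N r : ℕ} (h : r ≤ N) (lam : Fin N → ℝ)
    (hanti : Antitone lam) (S : Fin N → Fin r → ℝ) (hS : ∀ k p, 0 ≤ S k p)
    (hcol : ∀ p, ∑ k, S k p = 1) (hrow : ∀ k, ∑ p, S k p ≤ 1) :
    ∑ p : Fin r, ((r : ℝ) - p) * ∑ k, lam k * S k p ≤
      ∑ p : Fin r, ((r : ℝ) - p) * lam (Fin.castLE h p) := by
  have hweight : ∀ p : Fin r, (r : ℝ) - p = #(Ici p) := by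
    intro p
    rw [Fin.card_Ici, Nat.cast_sub p.isLt.le]
  simp only [hweight, sum_card_Ici_mul_eq_sum_sum_Iic]
  refine sum_le_sum fun t _ => ?_
  have hIic : (Iic t).map (Fin.castLEEmb h) = Iic (Fin.castLE h t) := Fin.map_castLEEmb_Iic t h
  calc ∑ p ∈ Iic t, ∑ k, lam k * S k p = ∑ k, lam k * ∑ p ∈ Iic t, S k p := by
        rw [sum_comm]
        simp only [mul_sum]
    _ ≤ ∑ k ∈ Iic (Fin.castLE h t), lam k := by
        refine sum_mul_le_sum_of_threshold lam _ _ (lam (Fin.castLE h t))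
          (fun k hk => hanti (mem_Iic.mp hk)) (fun k hk => hanti (not_le.mp (by simpa using hk)).le)
          (fun k => sum_nonneg fun p _ => hS k p)
          (fun k => (sum_le_sum_of_subset_of_nonneg (subset_univ _)
            fun p _ _ => hS k p).trans (hrow k)) ?_
        rw [sum_comm, sum_congr rfl fun p _ => hcol p, ← hIic, card_map]
        simp
    _ = ∑ p ∈ Iic t, lam (Fin.castLE h p) := by
        rw [← hIic, sum_map]
        rfl

theorem sum_sq_col_eq_one_of_transpose_mul_self_eq_one {m n : Type*} [Fintype m]
    [DecidableEq n] {B : Matrix m n ℝ} (hB : Bᵀ * B = 1) (p : n) : ∑ k, B k p ^ 2 = 1 := by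
  simpa [mul_apply, sq] using congrFun (congrFun hB p) p

theorem sum_sq_row_le_one_of_transpose_mul_self_eq_one {m n : Type*} [Fintype m] [Fintype n]
    [DecidableEq n] {B : Matrix m n ℝ} (hB : Bᵀ * B = 1) (k : m) : ∑ p, B k p ^ 2 ≤ 1 := by
  set P := B * Bᵀ
  have hPk : P k k = ∑ p, B k p ^ 2 := by simp [P, mul_apply, sq]
  -- `P` is an orthogonal projection, so `P k k = ‖P eₖ‖² ≥ (P k k)²`.
  have hidem : P k k = ∑ l, P k l ^ 2 := by
    have hPP : P * P = P := by
      rw [Matrix.mul_assoc B, ← Matrix.mul_assoc Bᵀ, hB, Matrix.one_mul]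
    have hsymm : Pᵀ = P := by simp [P]
    conv_lhs => rw [← hPP]
    simp only [mul_apply, sq]
    exact sum_congr rfl fun l _ => by rw [← transpose_apply P l k, hsymm]
  have hle : P k k ^ 2 ≤ P k k := hidem ▸ single_le_sum (fun l _ => sq_nonneg (P k l)) (mem_univ k)
  rw [← hPk]
  nlinarith

/-- The Hessian quadratic form `hess g(X)[U,U]`. -/
noncomputable def hessQuad {N r : ℕ} (M : Matrix (Fin N) (Fin N) ℝ)
    (X U : Matrix (Fin N) (Fin r) ℝ) : ℝ :=
  tip (Xᵀ * M * X) (Uᵀ * U * Nr r) - tip M (U * Nr r * Uᵀ)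

def stdFrame {N r : ℕ} (h : r ≤ N) : Matrix (Fin N) (Fin r) ℝ :=
  (1 : Matrix (Fin N) (Fin N) ℝ).submatrix id (Fin.castLE h)

section Tip

variable {m n N : ℕ}

theorem tip_eq_trace (A B : Matrix (Fin m) (Fin n) ℝ) : tip A B = trace (Aᵀ * B) := by
  simp only [tip, trace, Matrix.diag, mul_apply, transpose_apply]
  exact sum_comm

theorem tip_self (A : Matrix (Fin m) (Fin n) ℝ) : tip A A = ∑ i, ∑ j, A i j ^ 2 := by
  simp only [tip, sq]

theorem tip_diagonal (f : Fin m → ℝ) (C : Matrix (Fin m) (Fin m) ℝ) :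
    tip (diagonal f) C = ∑ i, f i * C i i := by
  simp [tip, diagonal_apply]

variable {V : Matrix (Fin N) (Fin N) ℝ}

theorem tip_orthogonal_mul (hV : Vᵀ * V = 1) (A B : Matrix (Fin N) (Fin n) ℝ) :
    tip (V * A) (V * B) = tip A B := by
  rw [tip_eq_trace, tip_eq_trace, transpose_mul, Matrix.mul_assoc, ← Matrix.mul_assoc Vᵀ, hV,
    Matrix.one_mul]

theorem tip_mul_orthogonal_transpose (hV : Vᵀ * V = 1) (A B : Matrix (Fin m) (Fin N) ℝ) :
    tip (A * Vᵀ) (B * Vᵀ) = tip A B := by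
  rw [tip_eq_trace, tip_eq_trace, transpose_mul, transpose_transpose, ← Matrix.mul_assoc,
    trace_mul_comm, ← Matrix.mul_assoc, ← Matrix.mul_assoc, hV, Matrix.one_mul]

theorem transpose_mul_conj_mul {r : ℕ} (hV : Vᵀ * V = 1) (D : Matrix (Fin N) (Fin N) ℝ)
    (B C : Matrix (Fin N) (Fin r) ℝ) : (V * B)ᵀ * (V * D * Vᵀ) * (V * C) = Bᵀ * D * C := by
  simp only [transpose_mul, Matrix.mul_assoc]
  rw [← Matrix.mul_assoc Vᵀ V, hV, Matrix.one_mul, ← Matrix.mul_assoc Vᵀ V, hV, Matrix.one_mul]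

theorem hessQuad_conj {r : ℕ} (hV : Vᵀ * V = 1) (D : Matrix (Fin N) (Fin N) ℝ)
    (X U : Matrix (Fin N) (Fin r) ℝ) :
    hessQuad (V * D * Vᵀ) (V * X) (V * U) = hessQuad D X U := by
  have hUU : (V * U)ᵀ * (V * U) = Uᵀ * U := by
    rw [transpose_mul, Matrix.mul_assoc, ← Matrix.mul_assoc Vᵀ, hV, Matrix.one_mul]
  have hM : V * D * Vᵀ = V * (D * Vᵀ) := Matrix.mul_assoc _ _ _
  have hU : V * U * Nr r * (V * U)ᵀ = V * (U * Nr r * Uᵀ * Vᵀ) := by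
    simp only [transpose_mul, Matrix.mul_assoc]
  rw [hessQuad, hessQuad, transpose_mul_conj_mul hV, hUU, hU, hM, tip_orthogonal_mul hV,
    tip_mul_orthogonal_transpose hV]

end Tip

theorem transpose_mul_diagonal_mul_apply_self {m n : Type*} [Fintype m] [DecidableEq m]
    (d : m → ℝ) (B : Matrix m n ℝ) (p : n) :
    (Bᵀ * diagonal d * B) p p = ∑ k, d k * B k p ^ 2 := by
  rw [mul_apply]
  exact sum_congr rfl fun k _ => by rw [mul_diagonal, transpose_apply]; ring

section StdFrame

variable {N r : ℕ} (h : r ≤ N)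

theorem mul_stdFrame {m : Type*} (A : Matrix m (Fin N) ℝ) :
    A * stdFrame h = A.submatrix id (Fin.castLE h) :=
  mul_submatrix_one (Equiv.refl _) _ A

theorem stdFrame_transpose_mul {n : Type*} (A : Matrix (Fin N) n ℝ) :
    (stdFrame h)ᵀ * A = A.submatrix (Fin.castLE h) id := by
  rw [stdFrame, transpose_submatrix, transpose_one]
  exact one_submatrix_mul _ (Equiv.refl _) A

theorem stdFrame_transpose_mul_diagonal_mul (lam : Fin N → ℝ) :
    (stdFrame h)ᵀ * diagonal lam * stdFrame h = diagonal (lam ∘ Fin.castLE h) := by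
  rw [stdFrame_transpose_mul, mul_stdFrame, submatrix_submatrix]
  exact submatrix_diagonal_embedding lam (Fin.castLEEmb h)

theorem hessQuad_diagonal_stdFrame (lam : Fin N → ℝ) (A : Matrix (Fin N) (Fin r) ℝ) :
    hessQuad (diagonal lam) (stdFrame h) A =
      ∑ k, ∑ p : Fin r, ((r : ℝ) - p) * (lam (Fin.castLE h p) - lam k) * A k p ^ 2 := by
  have hAA : ∀ p, (Aᵀ * A) p p = ∑ k, A k p ^ 2 := fun p => by simp [mul_apply, sq]
  have hANA : ∀ k, (A * Nr r * Aᵀ) k k = ∑ p : Fin r, ((r : ℝ) - p) * A k p ^ 2 := fun k => by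
    simpa [Nr] using transpose_mul_diagonal_mul_apply_self _ Aᵀ k
  rw [hessQuad, stdFrame_transpose_mul_diagonal_mul, tip_diagonal, tip_diagonal]
  simp only [hANA]
  simp only [Nr, mul_diagonal, hAA, Function.comp_apply, sum_mul, mul_sum]
  rw [sum_comm, ← sum_sub_distrib]
  refine sum_congr rfl fun k _ => ?_
  rw [← sum_sub_distrib]
  exact sum_congr rfl fun p _ => by ring

end StdFrame

theorem trace_transpose_mul_diagonal_mul_mul_Nr {N r : ℕ} (lam : Fin N → ℝ)
    (B : Matrix (Fin N) (Fin r) ℝ) :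
    trace (Bᵀ * diagonal lam * B * Nr r) = ∑ p : Fin r, ((r : ℝ) - p) * ∑ k, lam k * B k p ^ 2 := by
  simp only [Nr, trace, Matrix.diag, mul_diagonal, transpose_mul_diagonal_mul_apply_self]
  exact sum_congr rfl fun p _ => mul_comm _ _

theorem half_mul_sum_sq_le_hessQuad_diagonal_stdFrame {N r : ℕ} (h : r < N) (lam : Fin N → ℝ)
    (hanti : Antitone lam) (d : ℝ)
    (hgap : ∀ s j : Fin N, (s : ℕ) < (j : ℕ) → (j : ℕ) ≤ r → d ≤ lam s - lam j)
    (A : Matrix (Fin N) (Fin r) ℝ) (hA : (stdFrame h.le)ᵀ * A + Aᵀ * stdFrame h.le = 0) :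
    1 / 2 * d * ∑ k, ∑ p, A k p ^ 2 ≤ hessQuad (diagonal lam) (stdFrame h.le) A := by
  rw [hessQuad_diagonal_stdFrame]
  refine half_mul_sum_sq_le_sum_gap_mul_sq h lam hanti d hgap A fun p q => ?_
  have hpq := congrFun (congrFun hA p) q
  simp only [stdFrame_transpose_mul, mul_stdFrame, Matrix.add_apply, submatrix_apply, id,
    transpose_apply, Matrix.zero_apply] at hpq
  linarith

theorem of_mul_transpose_of_eq_one {m n : Type*} [Fintype m] [DecidableEq n] (v : n → m → ℝ)
    (horth : ∀ i j, v i ⬝ᵥ v j = if i = j then 1 else 0) : of v * (of v)ᵀ = 1 := by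
  ext i j
  rw [mul_apply', one_apply]
  exact horth i j

theorem mul_transpose_of_eq_transpose_of_mul_diagonal {m n : Type*} [Fintype m] [Fintype n]
    [DecidableEq n] (M : Matrix m m ℝ) (v : n → m → ℝ) (lam : n → ℝ)
    (heig : ∀ i, M *ᵥ v i = lam i • v i) :
    M * (of v)ᵀ = (of v)ᵀ * diagonal lam := by
  ext i k
  rw [mul_diagonal]
  simpa [mulVec, dotProduct, mul_apply, mul_comm] using congrFun (heig k) i

theorem stmt_8_general {N r : ℕ} (hrN : r < N)
    (M : Matrix (Fin N) (Fin N) ℝ)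
    (lam : Fin N → ℝ) (v : Fin N → Fin N → ℝ)
    (horth : ∀ i j : Fin N, v i ⬝ᵥ v j = if i = j then 1 else 0)
    (heig : ∀ i : Fin N, M *ᵥ v i = lam i • v i)
    (hstrict : ∀ s j : Fin N, (s : ℕ) < (j : ℕ) → (j : ℕ) ≤ r → lam j < lam s)
    (hmono : ∀ s j : Fin N, r ≤ (s : ℕ) → s ≤ j → lam j ≤ lam s)
    (X : Matrix (Fin N) (Fin r) ℝ)
    (hX : ∀ (i : Fin N) (j : Fin r), X i j = v (Fin.castLE hrN.le j) i) :
    (∀ U : Matrix (Fin N) (Fin r) ℝ, Xᵀ * U + Uᵀ * X = 0 →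
      tip (Xᵀ * M * X) (Uᵀ * U * Nr r) - tip M (U * Nr r * Uᵀ) ≥
        (1/2 : ℝ) * dmin lam r * ∑ i, ∑ j, U i j ^ 2) ∧
    (∀ Z : Matrix (Fin N) (Fin r) ℝ, Zᵀ * Z = 1 →
      -(1/2 : ℝ) * (Xᵀ * M * X * Nr r).trace ≤ -(1/2 : ℝ) * (Zᵀ * M * Z * Nr r).trace) := by
  set V : Matrix (Fin N) (Fin N) ℝ := (of v)ᵀ
  have hV : Vᵀ * V = 1 := by simpa [V] using of_mul_transpose_of_eq_one v horth
  have hV' : V * Vᵀ = 1 := mul_eq_one_comm.mp hV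
  have hM : M = V * diagonal lam * Vᵀ := by
    rw [← mul_transpose_of_eq_transpose_of_mul_diagonal M v lam heig, Matrix.mul_assoc, hV',
      Matrix.mul_one]
  have hXV : X = V * stdFrame hrN.le := by
    ext i j
    simp [mul_stdFrame, hX, V]
  have hanti := antitone_of_strictAnti_head_of_antitone_tail hrN lam hstrict hmono
  have hcoords : ∀ W : Matrix (Fin N) (Fin r) ℝ, ∃ B : Matrix (Fin N) (Fin r) ℝ, W = V * B :=
    fun W => ⟨Vᵀ * W, by rw [← Matrix.mul_assoc, hV', Matrix.one_mul]⟩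
  subst hM hXV
  refine ⟨fun U hU => ?_, fun Z hZ => ?_⟩
  · obtain ⟨A, rfl⟩ := hcoords U
    have hA : (stdFrame hrN.le)ᵀ * A + Aᵀ * stdFrame hrN.le = 0 := by
      simpa only [transpose_mul, Matrix.mul_assoc, ← Matrix.mul_assoc Vᵀ V, hV, Matrix.one_mul]
        using hU
    rw [← tip_self, tip_orthogonal_mul hV, tip_self]
    exact half_mul_sum_sq_le_hessQuad_diagonal_stdFrame hrN lam hanti _
      (fun s j => dmin_le_sub lam r) A hA |>.trans_eq (hessQuad_conj hV _ _ _).symm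
  · obtain ⟨B, rfl⟩ := hcoords Z
    have hB : Bᵀ * B = 1 := by
      rwa [transpose_mul, Matrix.mul_assoc, ← Matrix.mul_assoc Vᵀ, hV, Matrix.one_mul] at hZ
    rw [transpose_mul_conj_mul hV, transpose_mul_conj_mul hV,
      trace_transpose_mul_diagonal_mul_mul_Nr, trace_transpose_mul_diagonal_mul_mul_Nr]
    have := sum_weight_mul_le_of_antitone_of_substochastic hrN.le lam hanti (fun k p => B k p ^ 2)
      (fun _ _ => sq_nonneg _) (sum_sq_col_eq_one_of_transpose_mul_self_eq_one hB)
      (sum_sq_row_le_one_of_transpose_mul_self_eq_one hB)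
    simp only [stdFrame, submatrix_apply, id, one_apply, ite_pow, one_pow, zero_pow two_ne_zero,
      mul_ite, mul_one, mul_zero, sum_ite_eq', mem_univ, if_true]
    linarith

/-- Theorem 2, Case 1: if the columns of `X_Ω` are the leading `r`
unit eigenvectors of `M` (eigenvalues `λ₁ > ⋯ > λ_r > λ_{r+1} ≥ ⋯ ≥ λ_N`, in order),
then the Riemannian Hessian of `g` at `X_Ω` satisfies
`hess g(X_Ω)[U,U] ≥ (1/2) d_min ‖U‖_F²` on the tangent space, and `X_Ω` is a
global minimizer of `g` on the Stiefel manifold. -/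
theorem stmt_8 {N r : ℕ} (hr : 1 ≤ r) (hrN : r < N)
    (M : Matrix (Fin N) (Fin N) ℝ) (hM : M.IsSymm)
    (lam : Fin N → ℝ) (v : Fin N → Fin N → ℝ)
    (horth : ∀ i j : Fin N, v i ⬝ᵥ v j = if i = j then 1 else 0)
    (heig : ∀ i : Fin N, M *ᵥ v i = lam i • v i)
    (hstrict : ∀ s j : Fin N, (s : ℕ) < (j : ℕ) → (j : ℕ) ≤ r → lam j < lam s)
    (hmono : ∀ s j : Fin N, r ≤ (s : ℕ) → s ≤ j → lam j ≤ lam s)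
    (X : Matrix (Fin N) (Fin r) ℝ)
    (hX : ∀ (i : Fin N) (j : Fin r), X i j = v (Fin.castLE hrN.le j) i) :
    (∀ U : Matrix (Fin N) (Fin r) ℝ, Xᵀ * U + Uᵀ * X = 0 →
      tip (Xᵀ * M * X) (Uᵀ * U * Nr r) - tip M (U * Nr r * Uᵀ) ≥
        (1/2 : ℝ) * dmin lam r * ∑ i, ∑ j, U i j ^ 2) ∧
    (∀ Z : Matrix (Fin N) (Fin r) ℝ, Zᵀ * Z = 1 →
      -(1/2 : ℝ) * (Xᵀ * M * X * Nr r).trace ≤ -(1/2 : ℝ) * (Zᵀ * M * Z * Nr r).trace) :=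
  stmt_8_general hrN M lam v horth heig hstrict hmono X hX
end

section
/- (Theorem 2, Case 3: non-leading eigenvector selections are strict saddles.) Let M be an N×N real symmetric matrix with eigenvalues λ₁ > λ₂ > ⋯ > λ_r > λ_{r+1} ≥ ⋯ ≥ λ_N and d_min = min_{1 ≤ s < j ≤ r+1} (λ_s − λ_j). Let Ω = {i₁, …, i_r} ⊆ {1, …, N} with Ω ≠ {1, …, r} (i.e., some i_j ≥ r+1), and let X_Ω ∈ ℝ^{N×r} whose j-th column is a unit eigenvector of M with eigenvalue λ_{i_j}, the columns being orthonormal. Then there exists a nonzero U in the tangent space T_{X_Ω} = {U : X_Ωᵀ U + Uᵀ X_Ω = 0} such that hess g(X_Ω)[U,U] ≤ −d_min ‖U‖_F²; in particular λ_min(hess g(X_Ω)) ≤ −d_min, so X_Ω is a strict saddle point of g on the Stiefel manifold. -/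
open Matrix

/-- Theorem 2, Case 3: if the columns of `X_Ω` are orthonormal unit
eigenvectors of `M` indexed by `Ω = {i₁,…,i_r} ≠ {1,…,r}` (so some `i_j ≥ r+1`;
0-based: `r ≤ ι j`), then there is a nonzero tangent direction `U` with
`hess g(X_Ω)[U,U] ≤ −d_min ‖U‖_F²`; `X_Ω` is a strict saddle point. -/
theorem stmt_10 {N r : ℕ} (hr : 1 ≤ r) (hrN : r < N)
    (M : Matrix (Fin N) (Fin N) ℝ) (hM : M.IsSymm)
    (lam : Fin N → ℝ) (v : Fin N → Fin N → ℝ)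
    (horth : ∀ i j : Fin N, v i ⬝ᵥ v j = if i = j then 1 else 0)
    (heig : ∀ i : Fin N, M *ᵥ v i = lam i • v i)
    (hstrict : ∀ s j : Fin N, (s : ℕ) < (j : ℕ) → (j : ℕ) ≤ r → lam j < lam s)
    (hmono : ∀ s j : Fin N, r ≤ (s : ℕ) → s ≤ j → lam j ≤ lam s)
    (ι : Fin r → Fin N) (hinj : Function.Injective ι)
    (hout : ∃ j : Fin r, r ≤ ((ι j : ℕ)))
    (X : Matrix (Fin N) (Fin r) ℝ)
    (hX : ∀ (i : Fin N) (j : Fin r), X i j = v (ι j) i) :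
    ∃ U : Matrix (Fin N) (Fin r) ℝ, U ≠ 0 ∧ Xᵀ * U + Uᵀ * X = 0 ∧
      tip (Xᵀ * M * X) (Uᵀ * U * Nr r) - tip M (U * Nr r * Uᵀ) ≤
        -(dmin lam r) * ∑ i, ∑ j, U i j ^ 2 := by
  classical
  obtain ⟨j0, hj0⟩ := hout
  -- find k : Fin N with k.val < r and k not in range of ι
  have hkex : ∃ k : Fin N, (k : ℕ) < r ∧ ∀ a : Fin r, ι a ≠ k := by
    by_contra h
    push_neg at h
    -- then {i | i.val < r} ⊆ (image ι univ).erase (ι j0)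
    have hsub : (Finset.univ.filter (fun i : Fin N => (i : ℕ) < r)) ⊆
        (Finset.univ.image ι).erase (ι j0) := by
      intro i hi
      simp only [Finset.mem_filter, Finset.mem_univ, true_and] at hi
      obtain ⟨a, ha⟩ := h i hi
      refine Finset.mem_erase.2 ⟨?_, Finset.mem_image.2 ⟨a, Finset.mem_univ a, ha⟩⟩
      intro hcon
      rw [hcon] at hi
      omega
    have hcard1 : (Finset.univ.filter (fun i : Fin N => (i : ℕ) < r)).card = r := by
      have : (Finset.univ.filter (fun i : Fin N => (i : ℕ) < r)) =
          Finset.univ.image (Fin.castLE hrN.le) := by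
        ext i
        simp only [Finset.mem_filter, Finset.mem_univ, true_and, Finset.mem_image]
        constructor
        · intro hi; exact ⟨⟨i, hi⟩, rfl⟩
        · rintro ⟨a, -, rfl⟩; exact a.2
      rw [this, Finset.card_image_of_injective _ (Fin.castLE_injective _), Finset.card_univ,
        Fintype.card_fin]
    have hcard2 : ((Finset.univ.image ι).erase (ι j0)).card ≤ r - 1 := by
      have h1 : (Finset.univ.image ι).card ≤ r := by
        calc (Finset.univ.image ι).card ≤ (Finset.univ : Finset (Fin r)).card :=
          Finset.card_image_le
        _ = r := by simp
      have hm : ι j0 ∈ Finset.univ.image ι := Finset.mem_image.2 ⟨j0, Finset.mem_univ _, rfl⟩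
      have := Finset.card_erase_of_mem hm
      omega
    have := Finset.card_le_card hsub
    omega
  obtain ⟨k, hkr, hknot⟩ := hkex
  -- ι j0 ≠ k since its value is ≥ r; lam facts
  set jr : Fin N := ⟨r, hrN⟩ with hjr
  have hdle : dmin lam r ≤ lam k - lam jr := by
    have hfin : ({d : ℝ | ∃ s j : Fin N, (s : ℕ) < (j : ℕ) ∧ (j : ℕ) ≤ r ∧ d = lam s - lam j}).Finite := by
      apply Set.Finite.subset (Set.finite_range (fun p : Fin N × Fin N => lam p.1 - lam p.2))
      rintro d ⟨s, j, -, -, rfl⟩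
      exact ⟨(s, j), rfl⟩
    apply csInf_le hfin.bddBelow
    refine Set.mem_setOf.2 ⟨k, jr, hkr, ?_, rfl⟩
    simp [hjr]
  have hlam1 : lam (ι j0) ≤ lam jr := by
    apply hmono jr (ι j0) (le_refl r)
    exact hj0
  have hlamk : lam jr < lam k := hstrict k jr hkr (le_refl r)
  -- the tangent direction
  set U : Matrix (Fin N) (Fin r) ℝ := Matrix.of fun i j => if j = j0 then v k i else 0 with hU
  have hUapp : ∀ i j, U i j = if j = j0 then v k i else 0 := fun i j => rfl
  have hvk : ∑ i, v k i * v k i = 1 := by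
    have := horth k k
    rw [if_pos rfl] at this
    simpa [dotProduct] using this
  have hvkne : ∃ i, v k i ≠ 0 := by
    by_contra h
    push_neg at h
    have h0 : (1:ℝ) = 0 := by
      rw [← hvk]
      apply Finset.sum_eq_zero
      intro i _
      rw [h i, zero_mul]
    norm_num at h0
  refine ⟨U, ?_, ?_, ?_⟩
  · obtain ⟨i, hi⟩ := hvkne
    intro h
    apply hi
    have := congrFun (congrFun h i) j0
    simpa [hUapp] using this
  · have hXU : Xᵀ * U = 0 := by
      ext a b
      simp only [Matrix.mul_apply, Matrix.transpose_apply, hUapp, Matrix.zero_apply]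
      rcases eq_or_ne b j0 with rfl | hb
      · simp only [if_pos rfl]
        have := horth (ι a) k
        rw [if_neg (hknot a)] at this
        simpa [dotProduct, hX] using this
      · simp [hb]
    have hUX : Uᵀ * X = 0 := by
      have : (Xᵀ * U)ᵀ = Uᵀ * X := by
        rw [Matrix.transpose_mul, Matrix.transpose_transpose]
      rw [← this, hXU, Matrix.transpose_zero]
    rw [hXU, hUX, add_zero]
  · -- numerical computation
    have hnorm : ∑ i, ∑ j, U i j ^ 2 = 1 := by
      rw [Finset.sum_comm]
      rw [Finset.sum_eq_single j0]
      · simpa [hUapp, pow_two] using hvk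
      · intro b _ hb
        simp [hUapp, hb]
      · simp
    -- U^T U = single entry
    have hUtU : ∀ a b : Fin r, (Uᵀ * U) a b = if a = j0 ∧ b = j0 then 1 else 0 := by
      intro a b
      simp only [Matrix.mul_apply, Matrix.transpose_apply, hUapp]
      by_cases ha : a = j0
      · by_cases hb : b = j0
        · simp [ha, hb, hvk]
        · simp [ha, hb]
      · simp [ha]
    have hquad : ∀ w : Fin N, ∑ i, ∑ i', M i i' * (v w i * v w i') = lam w := by
      intro w
      have : ∀ i, ∑ i', M i i' * (v w i * v w i') = v w i * (lam w * v w i) := by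
        intro i
        have hMv : ∑ i', M i i' * v w i' = lam w * v w i := by
          have := congrFun (heig w) i
          simpa [Matrix.mulVec, dotProduct] using this
        calc ∑ i', M i i' * (v w i * v w i') = v w i * ∑ i', M i i' * v w i' := by
              rw [Finset.mul_sum]; apply Finset.sum_congr rfl; intro i' _; ring
        _ = v w i * (lam w * v w i) := by rw [hMv]
      rw [Finset.sum_congr rfl (fun i _ => this i)]
      have : ∑ i, v w i * (lam w * v w i) = lam w * ∑ i, v w i * v w i := by
        rw [Finset.mul_sum]; apply Finset.sum_congr rfl; intro i _; ring
      rw [this]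
      have h1 : ∑ i, v w i * v w i = 1 := by
        have := horth w w; simpa [dotProduct] using this
      rw [h1, mul_one]
    have hXMX : (Xᵀ * M * X) j0 j0 = lam (ι j0) := by
      have : (Xᵀ * M * X) j0 j0 = ∑ i, ∑ i', M i i' * (v (ι j0) i * v (ι j0) i') := by
        simp only [Matrix.mul_apply, Matrix.transpose_apply, hX]
        rw [Finset.sum_comm]
        apply Finset.sum_congr rfl; intro i _
        rw [Finset.sum_mul]
        apply Finset.sum_congr rfl; intro i' _; ring
      rw [this, hquad]
    have htip1 : tip (Xᵀ * M * X) (Uᵀ * U * Nr r) = lam (ι j0) * ((r : ℝ) - (j0 : ℕ)) := by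
      unfold tip
      have hent : ∀ a b : Fin r, (Uᵀ * U * Nr r) a b =
          if a = j0 ∧ b = j0 then ((r : ℝ) - (j0 : ℕ)) else 0 := by
        intro a b
        rw [Nr, Matrix.mul_diagonal, hUtU]
        by_cases ha : a = j0 <;> by_cases hb : b = j0 <;> simp [ha, hb]
      rw [Finset.sum_congr rfl (fun a _ => Finset.sum_congr rfl (fun b _ => by rw [hent]))]
      rw [Finset.sum_eq_single j0]
      · rw [Finset.sum_eq_single j0]
        · simp [hXMX]
        · intro b _ hb; simp [hb]
        · simp
      · intro a _ ha
        apply Finset.sum_eq_zero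
        intro b _
        simp [ha]
      · simp
    have htip2 : tip M (U * Nr r * Uᵀ) = ((r : ℝ) - (j0 : ℕ)) * lam k := by
      unfold tip
      have hent : ∀ i i' : Fin N, (U * Nr r * Uᵀ) i i' =
          ((r : ℝ) - (j0 : ℕ)) * (v k i * v k i') := by
        intro i i'
        simp only [Matrix.mul_apply, Matrix.transpose_apply]
        rw [Finset.sum_eq_single j0]
        · rw [Nr]
          simp only [Matrix.mul_apply, Matrix.diagonal_apply]
          rw [Finset.sum_eq_single j0]
          · simp [hUapp]; ring
          · intro b _ hb; simp [hb]
          · simp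
        · intro b _ hb
          simp [hUapp, hb]
        · simp
      rw [Finset.sum_congr rfl (fun i _ => Finset.sum_congr rfl (fun i' _ => by rw [hent]))]
      have : ∀ i, ∑ i', M i i' * (((r : ℝ) - (j0 : ℕ)) * (v k i * v k i')) =
          ((r : ℝ) - (j0 : ℕ)) * ∑ i', M i i' * (v k i * v k i') := by
        intro i; rw [Finset.mul_sum]; apply Finset.sum_congr rfl; intro i' _; ring
      rw [Finset.sum_congr rfl (fun i _ => this i), ← Finset.mul_sum]
      rw [Finset.sum_congr rfl (fun i _ => rfl)]
      rw [hquad]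
    rw [htip1, htip2, hnorm, mul_one]
    -- final inequality
    have hc1 : (1 : ℝ) ≤ (r : ℝ) - (j0 : ℕ) := by
      have := j0.2
      have : ((j0 : ℕ) : ℝ) + 1 ≤ (r : ℝ) := by exact_mod_cast j0.2
      linarith
    have hd : dmin lam r ≤ lam k - lam (ι j0) := by
      linarith
    have hpos : 0 < lam k - lam (ι j0) := by linarith
    nlinarith [mul_le_mul_of_nonneg_left (le_of_lt hpos) (by linarith : (0:ℝ) ≤ (r : ℝ) - (j0 : ℕ) - 1)]
end

section
/- (Lemma 2, part (22).) Let M be an N×N real symmetric matrix with eigenvalues λ₁ > λ₂ > ⋯ > λ_r > λ_{r+1} ≥ ⋯ ≥ λ_N ≥ 0. If X ∈ St(N,r) satisfies ‖grad g(X)‖_F ≤ ε, then there exist indices i₁, …, i_r ∈ {1, …, N} such that ‖Xᵀ M X − Λ_Ω‖_F ≤ 4ε, where Λ_Ω = diag(λ_{i₁}, …, λ_{i_r}). -/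
open Matrix

/-- The Frobenius norm. -/
noncomputable def frob {m n : ℕ} (A : Matrix (Fin m) (Fin n) ℝ) : ℝ :=
  Real.sqrt (∑ i, ∑ j, A i j ^ 2)

/-- The Riemannian gradient `grad g(X) = (X Xᵀ − I) M X N_r − (1/2) X [Xᵀ M X, N_r]`. -/
noncomputable def gradg {N r : ℕ} (M : Matrix (Fin N) (Fin N) ℝ)
    (X : Matrix (Fin N) (Fin r) ℝ) : Matrix (Fin N) (Fin r) ℝ :=
  (X * Xᵀ - 1) * M * X * Nr r
    - (1/2 : ℝ) • (X * (Xᵀ * M * X * Nr r - Nr r * (Xᵀ * M * X)))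

noncomputable def f2 {m n : ℕ} (A : Matrix (Fin m) (Fin n) ℝ) : ℝ := ∑ i, ∑ j, A i j ^ 2

lemma f2_nonneg {m n : ℕ} (A : Matrix (Fin m) (Fin n) ℝ) : 0 ≤ f2 A := by
  unfold f2; positivity

lemma f2_eq_trace {m n : ℕ} (A : Matrix (Fin m) (Fin n) ℝ) :
    f2 A = Matrix.trace (Aᵀ * A) := by
  simp only [f2, Matrix.trace, Matrix.diag, Matrix.mul_apply, Matrix.transpose_apply, sq]
  exact Finset.sum_comm

lemma f2_neg {m n : ℕ} (A : Matrix (Fin m) (Fin n) ℝ) : f2 (-A) = f2 A := by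
  simp [f2]

/-- Parseval-type identity for a family with orthonormal "columns". -/
lemma sum_sq_orth {n m : ℕ} (W : Fin n → Fin m → ℝ)
    (h : ∀ a b : Fin m, ∑ j, W j a * W j b = if a = b then (1:ℝ) else 0)
    (y : Fin m → ℝ) : ∑ j, (∑ k, W j k * y k) ^ 2 = ∑ k, y k ^ 2 := by
  calc ∑ j, (∑ k, W j k * y k) ^ 2
      = ∑ j, ∑ k, ∑ l, (W j k * y k) * (W j l * y l) := by
        refine Finset.sum_congr rfl fun j _ => ?_
        rw [sq, Finset.sum_mul_sum]
    _ = ∑ k, ∑ l, ∑ j, (W j k * y k) * (W j l * y l) := by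
        rw [Finset.sum_comm]
        exact Finset.sum_congr rfl fun k _ => Finset.sum_comm
    _ = ∑ k, ∑ l, (if k = l then (1:ℝ) else 0) * (y k * y l) := by
        refine Finset.sum_congr rfl fun k _ => Finset.sum_congr rfl fun l _ => ?_
        rw [← h k l, Finset.sum_mul]
        exact Finset.sum_congr rfl fun j _ => by ring
    _ = ∑ k, y k ^ 2 := by
        refine Finset.sum_congr rfl fun k _ => ?_
        simp [sq]

set_option maxHeartbeats 2000000 in
/-- Lemma 2, part (22): if `X ∈ St(N,r)` satisfies
`‖grad g(X)‖_F ≤ ε`, then there are indices `i₁, …, i_r` of eigenvalues of `M`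
such that `‖Xᵀ M X − diag(λ_{i₁}, …, λ_{i_r})‖_F ≤ 4ε`. -/
theorem stmt_12 {N r : ℕ} (hr : 1 ≤ r) (hrN : r < N)
    (M : Matrix (Fin N) (Fin N) ℝ) (hM : M.IsSymm)
    (lam : Fin N → ℝ) (v : Fin N → Fin N → ℝ)
    (horth : ∀ i j : Fin N, v i ⬝ᵥ v j = if i = j then 1 else 0)
    (heig : ∀ i : Fin N, M *ᵥ v i = lam i • v i)
    (hstrict : ∀ s j : Fin N, (s : ℕ) < (j : ℕ) → (j : ℕ) ≤ r → lam j < lam s)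
    (hmono : ∀ s j : Fin N, r ≤ (s : ℕ) → s ≤ j → lam j ≤ lam s)
    (hnonneg : 0 ≤ lam ⟨N - 1, by omega⟩)
    (X : Matrix (Fin N) (Fin r) ℝ) (hX : Xᵀ * X = 1) (ε : ℝ)
    (hgrad : frob (gradg M X) ≤ ε) :
    ∃ ι : Fin r → Fin N,
      frob (Xᵀ * M * X - Matrix.diagonal fun j => lam (ι j)) ≤ 4 * ε := by
  classical
  have hN : 0 < N := lt_of_le_of_lt (Nat.zero_le r) hrN
  set A : Matrix (Fin r) (Fin r) ℝ := Xᵀ * M * X with hA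
  set Kc : Matrix (Fin r) (Fin r) ℝ := A * Nr r - Nr r * A with hK
  set P : Matrix (Fin N) (Fin r) ℝ := (X * Xᵀ - 1) * M * X * Nr r with hP
  set E : Matrix (Fin N) (Fin r) ℝ := M * X - X * A with hE
  have hε : 0 ≤ ε := le_trans (Real.sqrt_nonneg _) hgrad
  have hG2 : f2 (gradg M X) ≤ ε ^ 2 := by
    have h1 : Real.sqrt (f2 (gradg M X)) ≤ ε := hgrad
    nlinarith [Real.sq_sqrt (f2_nonneg (gradg M X)), Real.sqrt_nonneg (f2 (gradg M X))]
  have hXP : Xᵀ * P = 0 := by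
    have h1 : Xᵀ * (X * Xᵀ - 1) = 0 := by
      rw [Matrix.mul_sub, Matrix.mul_one, ← Matrix.mul_assoc, hX, Matrix.one_mul, sub_self]
    rw [hP]
    rw [← Matrix.mul_assoc, ← Matrix.mul_assoc, ← Matrix.mul_assoc, h1, Matrix.zero_mul,
      Matrix.zero_mul, Matrix.zero_mul]
  have decomp : f2 (gradg M X) = f2 P + (1/4) * f2 Kc := by
    have hgr : gradg M X = P - (1/2 : ℝ) • (X * Kc) := rfl
    set Q : Matrix (Fin N) (Fin r) ℝ := X * Kc with hQ
    have e1 : Pᵀ * Q = 0 := by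
      have h2 : Pᵀ * X = 0 := by
        have := congrArg Matrix.transpose hXP
        simpa [Matrix.transpose_mul] using this
      rw [hQ, ← Matrix.mul_assoc, h2, Matrix.zero_mul]
    have e2 : Qᵀ * P = 0 := by
      rw [hQ, Matrix.transpose_mul, Matrix.mul_assoc, hXP, Matrix.mul_zero]
    have e3 : Qᵀ * Q = Kcᵀ * Kc := by
      rw [hQ, Matrix.transpose_mul, Matrix.mul_assoc, ← Matrix.mul_assoc Xᵀ, hX, Matrix.one_mul]
    rw [hgr, f2_eq_trace, f2_eq_trace, f2_eq_trace]
    rw [Matrix.transpose_sub, Matrix.transpose_smul]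
    simp only [Matrix.sub_mul, Matrix.mul_sub, Matrix.smul_mul, Matrix.mul_smul,
      e1, e2, e3, smul_zero, Matrix.trace_sub, Matrix.trace_neg, Matrix.trace_smul, smul_eq_mul,
      Matrix.trace_zero, sub_zero, zero_sub, smul_smul]
    ring
  have hP2 : f2 P ≤ ε ^ 2 := by nlinarith [f2_nonneg Kc, f2_nonneg P]
  have hK2 : f2 Kc ≤ 4 * ε ^ 2 := by nlinarith [f2_nonneg Kc, f2_nonneg P]
  -- off-diagonal bound
  have hKentry : ∀ i j : Fin r, Kc i j = A i j * (((i:ℕ):ℝ) - ((j:ℕ):ℝ)) := by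
    intro i j
    rw [hK]
    simp only [Matrix.sub_apply, Nr, Matrix.mul_diagonal, Matrix.diagonal_mul]
    ring
  have hgap : ∀ i j : Fin r, i ≠ j → (1:ℝ) ≤ (((i:ℕ):ℝ) - ((j:ℕ):ℝ)) ^ 2 := by
    intro i j h
    have hne : (i:ℕ) ≠ (j:ℕ) := fun hc => h (Fin.ext hc)
    rcases lt_or_gt_of_ne hne with hlt | hlt
    · have h1 : ((i:ℕ):ℝ) + 1 ≤ ((j:ℕ):ℝ) := by exact_mod_cast Nat.succ_le_of_lt hlt
      nlinarith
    · have h1 : ((j:ℕ):ℝ) + 1 ≤ ((i:ℕ):ℝ) := by exact_mod_cast Nat.succ_le_of_lt hlt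
      nlinarith
  have hsoff : (∑ i, ∑ j, (if i = j then (0:ℝ) else A i j ^ 2)) ≤ 4 * ε ^ 2 := by
    refine le_trans ?_ hK2
    have : (∑ i, ∑ j, (if i = j then (0:ℝ) else A i j ^ 2)) ≤ f2 Kc := by
      unfold f2
      refine Finset.sum_le_sum fun i _ => Finset.sum_le_sum fun j _ => ?_
      rw [hKentry i j, mul_pow]
      by_cases h : i = j
      · simp [h]
      · rw [if_neg h]
        nlinarith [hgap i j h, sq_nonneg (A i j)]
    exact this
  -- residual bound
  have hPE : P = -(E * Nr r) := by
    have h1 : (X * Xᵀ - 1) * M * X = -E := by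
      rw [hE, hA]
      rw [Matrix.sub_mul, Matrix.sub_mul, Matrix.one_mul]
      simp only [Matrix.mul_assoc]
      abel
    rw [hP, h1, Matrix.neg_mul]
  have hfE : f2 E ≤ ε ^ 2 := by
    refine le_trans ?_ hP2
    rw [hPE, f2_neg]
    unfold f2
    refine Finset.sum_le_sum fun i _ => Finset.sum_le_sum fun j _ => ?_
    have hd : (1:ℝ) ≤ (r:ℝ) - ((j:ℕ):ℝ) := by
      have := j.isLt
      have h1 : ((j:ℕ):ℝ) + 1 ≤ (r:ℝ) := by exact_mod_cast Nat.succ_le_of_lt this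
      linarith
    have hent : (E * Nr r) i j = E i j * ((r:ℝ) - ((j:ℕ):ℝ)) := by
      simp [Nr, Matrix.mul_diagonal]
    rw [hent, mul_pow]
    have h2 : (1:ℝ) ≤ ((r:ℝ) - ((j:ℕ):ℝ)) ^ 2 := by nlinarith
    nlinarith [mul_le_mul_of_nonneg_left h2 (sq_nonneg (E i j))]
  -- orthonormal columns
  have hVcol : ∀ a b : Fin N, ∑ j, v j a * v j b = if a = b then (1:ℝ) else 0 := by
    have hVV : (Matrix.of v) * (Matrix.of v)ᵀ = 1 := by
      ext p q
      have := horth p q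
      simpa [Matrix.mul_apply, dotProduct, Matrix.one_apply] using this
    have hVtV : (Matrix.of v)ᵀ * (Matrix.of v) = 1 := mul_eq_one_comm.mp hVV
    intro a b
    have := congrFun (congrFun hVtV a) b
    simpa [Matrix.mul_apply, Matrix.one_apply] using this
  have hXcol : ∀ a b : Fin r, ∑ k, X k a * X k b = if a = b then (1:ℝ) else 0 := by
    intro a b
    have := congrFun (congrFun hX a) b
    simpa [Matrix.mul_apply, Matrix.one_apply] using this
  have hsym : ∀ a b, M a b = M b a := by
    intro a b
    have := congrFun (congrFun hM a) b
    simpa [Matrix.transpose_apply] using this.symm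
  -- per-column eigenvalue approximation
  have main : ∀ i : Fin r, ∃ js : Fin N,
      (A i i - lam js) ^ 2 ≤
        (Real.sqrt (∑ k, (if k = i then (0:ℝ) else A k i ^ 2))
          + Real.sqrt (∑ k, E k i ^ 2)) ^ 2 := by
    intro i
    set u : Fin r → ℝ := fun l => if l = i then (0:ℝ) else A l i with hu
    set w : Fin N → ℝ := fun k => (∑ l, X k l * u l) + E k i with hw
    have hwk : ∀ k, w k = (∑ p, M k p * X p i) - A i i * X k i := by
      intro k
      have h3 : ∑ l, X k l * u l = (∑ l, X k l * A l i) - X k i * A i i := by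
        have t : ∀ l, X k l * u l
            = X k l * A l i - (if l = i then X k i * A i i else 0) := by
          intro l; by_cases h : l = i <;> simp [hu, h]
        rw [Finset.sum_congr rfl fun l _ => t l, Finset.sum_sub_distrib]
        simp
      have hEki : E k i = (∑ p, M k p * X p i) - (∑ l, X k l * A l i) := by
        rw [hE]
        simp [Matrix.sub_apply, Matrix.mul_apply]
      rw [hw]
      simp only []
      rw [h3, hEki]
      ring
    have hMv : ∀ j p, ∑ k, M k p * v j k = lam j * v j p := by
      intro j p
      calc ∑ k, M k p * v j k = ∑ k, M p k * v j k :=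
            Finset.sum_congr rfl fun k _ => by rw [hsym k p]
        _ = lam j * v j p := by
            have := congrFun (heig j) p
            simpa [Matrix.mulVec, dotProduct] using this
    have hwj : ∀ j, (∑ k, v j k * w k) = (lam j - A i i) * (∑ k, v j k * X k i) := by
      intro j
      have t1 : ∀ k, v j k * w k
          = (∑ p, (M k p * v j k) * X p i) - A i i * (v j k * X k i) := by
        intro k
        rw [hwk k, mul_sub, Finset.mul_sum]
        rw [Finset.sum_congr rfl fun p _ => (by ring :
          v j k * (M k p * X p i) = (M k p * v j k) * X p i)]
        ring
      calc ∑ k, v j k * w k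
          = (∑ k, ∑ p, (M k p * v j k) * X p i) - ∑ k, A i i * (v j k * X k i) := by
            rw [Finset.sum_congr rfl fun k _ => t1 k, Finset.sum_sub_distrib]
        _ = (∑ p, (∑ k, M k p * v j k) * X p i) - A i i * ∑ k, v j k * X k i := by
            rw [Finset.sum_comm, ← Finset.mul_sum]
            congr 1
            exact Finset.sum_congr rfl fun p _ => by rw [Finset.sum_mul]
        _ = (∑ p, (lam j * v j p) * X p i) - A i i * ∑ k, v j k * X k i := by
            rw [Finset.sum_congr rfl fun p _ => (by rw [hMv j p] :
              (∑ k, M k p * v j k) * X p i = (lam j * v j p) * X p i)]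
        _ = (lam j - A i i) * (∑ k, v j k * X k i) := by
            have h4 : ∑ p, (lam j * v j p) * X p i = lam j * ∑ p, v j p * X p i := by
              rw [Finset.mul_sum]
              exact Finset.sum_congr rfl fun p _ => by ring
            rw [h4]
            ring
    have hc1 : ∑ j, (∑ k, v j k * X k i) ^ 2 = 1 := by
      rw [sum_sq_orth v hVcol (fun k => X k i)]
      have h7 := hXcol i i
      rw [if_pos rfl] at h7
      rw [← h7]
      exact Finset.sum_congr rfl fun k _ => by rw [pow_two]
    have hww : ∑ k, w k ^ 2 = ∑ j, ((lam j - A i i) * (∑ k, v j k * X k i)) ^ 2 := by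
      rw [← sum_sq_orth v hVcol w]
      exact Finset.sum_congr rfl fun j _ => by rw [hwj j]
    obtain ⟨js, -, hjs⟩ := Finset.exists_min_image Finset.univ
      (fun j : Fin N => (lam j - A i i) ^ 2) ⟨⟨0, hN⟩, Finset.mem_univ _⟩
    have lower : (lam js - A i i) ^ 2 ≤ ∑ k, w k ^ 2 := by
      rw [hww]
      calc (lam js - A i i) ^ 2
          = (lam js - A i i) ^ 2 * ∑ j, (∑ k, v j k * X k i) ^ 2 := by rw [hc1]; ring
        _ ≤ ∑ j, ((lam j - A i i) * (∑ k, v j k * X k i)) ^ 2 := by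
            rw [Finset.mul_sum]
            refine Finset.sum_le_sum fun j _ => ?_
            rw [mul_pow]
            exact mul_le_mul_of_nonneg_right (hjs j (Finset.mem_univ j)) (sq_nonneg _)
    have hXu : ∑ k, (∑ l, X k l * u l) ^ 2 = ∑ l, u l ^ 2 :=
      sum_sq_orth (fun k l => X k l) hXcol u
    have hu2 : ∑ l, u l ^ 2 = ∑ k, (if k = i then (0:ℝ) else A k i ^ 2) := by
      refine Finset.sum_congr rfl fun l _ => ?_
      by_cases h : l = i <;> simp [hu, h]
    have cs : ∑ k, (∑ l, X k l * u l) * E k i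
        ≤ Real.sqrt (∑ k, (if k = i then (0:ℝ) else A k i ^ 2))
            * Real.sqrt (∑ k, E k i ^ 2) := by
      have h5 := Real.sum_mul_le_sqrt_mul_sqrt Finset.univ
        (fun k => ∑ l, X k l * u l) (fun k => E k i)
      rwa [hXu, hu2] at h5
    have expand : ∑ k, w k ^ 2
        = (∑ k, (if k = i then (0:ℝ) else A k i ^ 2))
          + 2 * (∑ k, (∑ l, X k l * u l) * E k i) + ∑ k, E k i ^ 2 := by
      have t : ∀ k, w k ^ 2 = (∑ l, X k l * u l) ^ 2
          + 2 * ((∑ l, X k l * u l) * E k i) + E k i ^ 2 := by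
        intro k; rw [hw]; ring
      rw [Finset.sum_congr rfl fun k _ => t k, Finset.sum_add_distrib,
        Finset.sum_add_distrib, ← Finset.mul_sum, hXu, hu2]
    have upper : ∑ k, w k ^ 2
        ≤ (Real.sqrt (∑ k, (if k = i then (0:ℝ) else A k i ^ 2))
            + Real.sqrt (∑ k, E k i ^ 2)) ^ 2 := by
      have ha := Real.sq_sqrt (show (0:ℝ) ≤ ∑ k, (if k = i then (0:ℝ) else A k i ^ 2) by positivity)
      have hb := Real.sq_sqrt (show (0:ℝ) ≤ ∑ k, E k i ^ 2 by positivity)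
      rw [expand]
      nlinarith [cs]
    refine ⟨js, ?_⟩
    have hflip : (A i i - lam js) ^ 2 = (lam js - A i i) ^ 2 := by ring
    rw [hflip]
    exact le_trans lower upper
  choose ι hι using main
  -- global sums
  have hSa : ∑ i, (∑ k, (if k = i then (0:ℝ) else A k i ^ 2)) ≤ 4 * ε ^ 2 := by
    refine le_trans (le_of_eq (Finset.sum_comm)) hsoff
  have hSb : ∑ i, (∑ k, E k i ^ 2) ≤ ε ^ 2 := by
    refine le_trans (le_of_eq (Finset.sum_comm)) ?_
    exact hfE
  have hdiag : ∑ i, (A i i - lam (ι i)) ^ 2 ≤ 9 * ε ^ 2 := by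
    set a : Fin r → ℝ := fun i => Real.sqrt (∑ k, (if k = i then (0:ℝ) else A k i ^ 2)) with haDef
    set b : Fin r → ℝ := fun i => Real.sqrt (∑ k, E k i ^ 2) with hbDef
    have ha2 : ∑ i, a i ^ 2 = ∑ i, (∑ k, (if k = i then (0:ℝ) else A k i ^ 2)) := by
      refine Finset.sum_congr rfl fun i _ => ?_
      exact Real.sq_sqrt (by positivity)
    have hb2 : ∑ i, b i ^ 2 = ∑ i, (∑ k, E k i ^ 2) := by
      refine Finset.sum_congr rfl fun i _ => ?_
      exact Real.sq_sqrt (by positivity)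
    have hcs : ∑ i, a i * b i ≤ Real.sqrt (∑ i, a i ^ 2) * Real.sqrt (∑ i, b i ^ 2) :=
      Real.sum_mul_le_sqrt_mul_sqrt Finset.univ a b
    have hsa : Real.sqrt (∑ i, a i ^ 2) ≤ 2 * ε := by
      rw [ha2]
      calc Real.sqrt (∑ i, (∑ k, (if k = i then (0:ℝ) else A k i ^ 2)))
          ≤ Real.sqrt (4 * ε ^ 2) := Real.sqrt_le_sqrt hSa
        _ = 2 * ε := by
            rw [show (4:ℝ) * ε ^ 2 = (2 * ε) ^ 2 by ring, Real.sqrt_sq (by linarith)]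
    have hsb : Real.sqrt (∑ i, b i ^ 2) ≤ ε := by
      rw [hb2]
      calc Real.sqrt (∑ i, (∑ k, E k i ^ 2)) ≤ Real.sqrt (ε ^ 2) := Real.sqrt_le_sqrt hSb
        _ = ε := Real.sqrt_sq hε
    have hab : ∑ i, a i * b i ≤ 2 * ε ^ 2 := by
      have h6 : Real.sqrt (∑ i, a i ^ 2) * Real.sqrt (∑ i, b i ^ 2) ≤ (2 * ε) * ε :=
        mul_le_mul hsa hsb (Real.sqrt_nonneg _) (by linarith)
      nlinarith
    have hexp : ∑ i, (a i + b i) ^ 2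
        = ∑ i, a i ^ 2 + 2 * ∑ i, a i * b i + ∑ i, b i ^ 2 := by
      rw [Finset.sum_congr rfl fun i _ => (by ring :
        (a i + b i) ^ 2 = a i ^ 2 + 2 * (a i * b i) + b i ^ 2),
        Finset.sum_add_distrib, Finset.sum_add_distrib, ← Finset.mul_sum]
    calc ∑ i, (A i i - lam (ι i)) ^ 2 ≤ ∑ i, (a i + b i) ^ 2 :=
          Finset.sum_le_sum fun i _ => hι i
      _ = ∑ i, a i ^ 2 + 2 * ∑ i, a i * b i + ∑ i, b i ^ 2 := hexp
      _ ≤ 4 * ε ^ 2 + 2 * (2 * ε ^ 2) + ε ^ 2 := by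
          have h8 : ∑ i, a i ^ 2 ≤ 4 * ε ^ 2 := ha2 ▸ hSa
          have h9 : ∑ i, b i ^ 2 ≤ ε ^ 2 := hb2 ▸ hSb
          linarith [hab]
      _ = 9 * ε ^ 2 := by ring
  -- conclusion
  refine ⟨ι, ?_⟩
  have hentry : ∀ i j : Fin r, ((A - Matrix.diagonal fun j => lam (ι j)) i j) ^ 2
      = (if i = j then (A i i - lam (ι i)) ^ 2 else A i j ^ 2) := by
    intro i j
    by_cases h : i = j
    · subst h; simp [Matrix.sub_apply, Matrix.diagonal_apply_eq]
    · simp [Matrix.sub_apply, Matrix.diagonal_apply_ne _ h, h]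
  have hsum : ∑ i, ∑ j, ((A - Matrix.diagonal fun j => lam (ι j)) i j) ^ 2 ≤ 13 * ε ^ 2 := by
    calc ∑ i, ∑ j, ((A - Matrix.diagonal fun j => lam (ι j)) i j) ^ 2
        = ∑ i, ((A i i - lam (ι i)) ^ 2 + ∑ j, (if i = j then (0:ℝ) else A i j ^ 2)) := by
          refine Finset.sum_congr rfl fun i _ => ?_
          rw [Finset.sum_congr rfl fun j _ => hentry i j]
          have t : ∀ j, (if i = j then (A i i - lam (ι i)) ^ 2 else A i j ^ 2)
              = (if i = j then (A i i - lam (ι i)) ^ 2 else 0)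
                + (if i = j then (0:ℝ) else A i j ^ 2) := by
            intro j; by_cases h : i = j <;> simp [h]
          rw [Finset.sum_congr rfl fun j _ => t j, Finset.sum_add_distrib]
          simp
      _ = (∑ i, (A i i - lam (ι i)) ^ 2)
          + ∑ i, ∑ j, (if i = j then (0:ℝ) else A i j ^ 2) := Finset.sum_add_distrib
      _ ≤ 9 * ε ^ 2 + 4 * ε ^ 2 := add_le_add hdiag hsoff
      _ = 13 * ε ^ 2 := by ring
  show Real.sqrt _ ≤ 4 * ε
  calc Real.sqrt (∑ i, ∑ j, ((A - Matrix.diagonal fun j => lam (ι j)) i j) ^ 2)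
      ≤ Real.sqrt (16 * ε ^ 2) := Real.sqrt_le_sqrt (by nlinarith [hsum, sq_nonneg ε])
    _ = 4 * ε := by
        rw [show (16:ℝ) * ε ^ 2 = (4 * ε) ^ 2 by ring, Real.sqrt_sq (by linarith)]
end

section
/- (Lemma 2, part (23).) Let M = diag(λ₁, …, λ_N) with λ₁ > λ₂ > ⋯ > λ_r > λ_{r+1} ≥ ⋯ ≥ λ_N ≥ 0, and let d_min = min_{1 ≤ s < j ≤ r+1} (λ_s − λ_j). Let X ∈ St(N,r) with ‖grad g(X)‖_F ≤ ε, and suppose that for each column x_j of X (j = 1, …, r) the eigenvalue of M closest to the Rayleigh quotient x_jᵀ M x_j is λ_j (i.e., |x_jᵀ M x_j − λ_j| = min_{1 ≤ n ≤ N} |x_jᵀ M x_j − λ_n|). Then there is a diagonal matrix S ∈ ℝ^{r×r} with diagonal entries ±1 such that ‖X − X_Ω S‖_F ≤ 12 ε / d_min, where X_Ω = [e₁, …, e_r] ∈ ℝ^{N×r} has as columns the first r standard basis vectors. -/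
open Matrix

/-!
Write `A = XᵀMX` and `R = MX - XA`. Since `XᵀX = 1` and `XᵀR = 0`, the gradient
`grad g(X) = -R N_r - ½ X [A, N_r]` is an orthogonal sum, so `‖R N_r‖² + ¼ ‖[A, N_r]‖² ≤ ε²`.
The weights of `N_r` are at least `1` and `[A, N_r]_{kj} = (k - j) A_{kj}`; hence `‖R‖ ≤ ε`,
`‖A - diag A‖ ≤ 2ε`, and the residual `E = MX - X diag A = R + X (A - diag A)` has `‖E‖² ≤ 5ε²`.

For `M = diag λ` the residual is `E_{ij} = (λ_i - ρ_j) X_{ij}`, with `ρ_j` the Rayleigh quotient of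
the column `x_j`. Since `λ_j` is the eigenvalue closest to `ρ_j`, `|λ_i - ρ_j| ≥ d_min / 2` for
`i ≠ j`, so the mass of `x_j` off the index `j` is at most `4 ‖E e_j‖² / d_min²`. For a unit
vector `‖x - sign(x_j) e_j‖² = 2 - 2|x_j| ≤ 2 (1 - x_j²)`, and summing over the columns gives
`‖X - X_Ω S‖² ≤ 40 ε² / d_min² ≤ (12 ε / d_min)²`.
-/

open Finset

section FrobeniusSq

variable {m n p : Type*} [Fintype m] [Fintype n] [Fintype p]

noncomputable def frobSq (A : Matrix m n ℝ) : ℝ := ∑ i, ∑ j, A i j ^ 2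

theorem frobSq_eq_trace (A : Matrix m n ℝ) : frobSq A = (Aᵀ * A).trace := by
  simp only [frobSq, trace, diag_apply, mul_apply, transpose_apply, sq]
  exact sum_comm

theorem frobSq_eq_sum_col (A : Matrix m n ℝ) : frobSq A = ∑ j, ∑ i, A i j ^ 2 :=
  sum_comm

theorem frobSq_nonneg (A : Matrix m n ℝ) : 0 ≤ frobSq A :=
  sum_nonneg fun _ _ => sum_nonneg fun _ _ => sq_nonneg _

theorem frobSq_le_frobSq {A B : Matrix m n ℝ} (h : ∀ i j, A i j ^ 2 ≤ B i j ^ 2) :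
    frobSq A ≤ frobSq B :=
  sum_le_sum fun i _ => sum_le_sum fun j _ => h i j

theorem frobSq_smul (c : ℝ) (A : Matrix m n ℝ) : frobSq (c • A) = c ^ 2 * frobSq A := by
  simp [frobSq, mul_pow, mul_sum]

theorem frobSq_neg (A : Matrix m n ℝ) : frobSq (-A) = frobSq A := by
  simp [frobSq]

theorem frobSq_add_mul_of_orthogonal [DecidableEq n] {X : Matrix m n ℝ} (hX : Xᵀ * X = 1)
    {A : Matrix m p ℝ} (hA : Xᵀ * A = 0) (C : Matrix n p ℝ) :
    frobSq (A + X * C) = frobSq A + frobSq C := by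
  have hA' : Aᵀ * X = 0 := by simpa using congrArg transpose hA
  simp only [frobSq_eq_trace, transpose_add, transpose_mul, Matrix.add_mul, Matrix.mul_add,
    trace_add, Matrix.mul_assoc, ← Matrix.mul_assoc Xᵀ, ← Matrix.mul_assoc Aᵀ, hA, hA', hX]
  simp

theorem frobSq_le_frobSq_mul_diagonal [DecidableEq n] {w : n → ℝ} (hw : ∀ j, 1 ≤ |w j|)
    (A : Matrix m n ℝ) : frobSq A ≤ frobSq (A * diagonal w) :=
  frobSq_le_frobSq fun i j => by
    rw [mul_diagonal, mul_pow]
    nlinarith [one_le_sq_iff_one_le_abs (w j) |>.2 (hw j), sq_nonneg (A i j)]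

theorem frobSq_sub_diagonal_diag_le [DecidableEq n] {w : n → ℝ}
    (hw : Pairwise fun i j => 1 ≤ |w i - w j|) (A : Matrix n n ℝ) :
    frobSq (A - diagonal A.diag) ≤ frobSq (A * diagonal w - diagonal w * A) :=
  frobSq_le_frobSq fun i j => by
    rcases eq_or_ne i j with rfl | hij
    · simp [mul_comm]
    · rw [Matrix.sub_apply, Matrix.sub_apply, diagonal_apply_ne _ hij, mul_diagonal,
        diagonal_mul, sub_zero]
      nlinarith [one_le_sq_iff_one_le_abs _ |>.2 (hw hij.symm), sq_nonneg (A i j)]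

end FrobeniusSq

theorem frob_le_of_frobSq_le {m n : ℕ} {A : Matrix (Fin m) (Fin n) ℝ} {c : ℝ} (hc : 0 ≤ c)
    (h : frobSq A ≤ c ^ 2) : frob A ≤ c :=
  (Real.sqrt_le_left hc).2 h

theorem frobSq_le_sq_of_frob_le {m n : ℕ} {A : Matrix (Fin m) (Fin n) ℝ} {c : ℝ}
    (h : frob A ≤ c) : frobSq A ≤ c ^ 2 :=
  (Real.sqrt_le_iff.1 h).2

section Gradient

variable {N r : ℕ} (M : Matrix (Fin N) (Fin N) ℝ) {X : Matrix (Fin N) (Fin r) ℝ}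

theorem one_le_abs_Nr_weight (j : Fin r) : 1 ≤ |(r : ℝ) - (j : ℕ)| := by
  have : ((j : ℕ) : ℝ) + 1 ≤ r := by exact_mod_cast j.isLt
  rw [abs_of_pos (by linarith)]
  linarith

theorem Nr_weight_pairwise :
    Pairwise fun i j : Fin r => 1 ≤ |((r : ℝ) - (i : ℕ)) - ((r : ℝ) - (j : ℕ))| := by
  intro i j hij
  have hne : ((j : ℕ) : ℤ) - (i : ℕ) ≠ 0 :=
    sub_ne_zero.2 (by exact_mod_cast Fin.val_ne_of_ne hij.symm)
  rw [sub_sub_sub_cancel_left]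
  exact_mod_cast Int.one_le_abs hne

theorem transpose_mul_residual_eq_zero (hX : Xᵀ * X = 1) :
    Xᵀ * (M * X - X * (Xᵀ * M * X)) = 0 := by
  rw [Matrix.mul_sub, ← Matrix.mul_assoc, ← Matrix.mul_assoc, hX, Matrix.one_mul,
    Matrix.mul_assoc, sub_self]

variable (X) in
theorem gradg_eq_residual_add :
    gradg M X = -((M * X - X * (Xᵀ * M * X)) * Nr r)
      + X * (-(1 / 2 : ℝ) • (Xᵀ * M * X * Nr r - Nr r * (Xᵀ * M * X))) := by
  have : (X * Xᵀ - 1) * M * X = -(M * X - X * (Xᵀ * M * X)) := by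
    simp only [Matrix.sub_mul, Matrix.one_mul, Matrix.mul_assoc, neg_sub]
  rw [gradg, this, Matrix.neg_mul, Matrix.mul_smul, neg_smul, ← sub_eq_add_neg]

theorem frobSq_gradg (hX : Xᵀ * X = 1) :
    frobSq (gradg M X) = frobSq ((M * X - X * (Xᵀ * M * X)) * Nr r)
      + frobSq (Xᵀ * M * X * Nr r - Nr r * (Xᵀ * M * X)) / 4 := by
  have hR : Xᵀ * -((M * X - X * (Xᵀ * M * X)) * Nr r) = 0 := by
    rw [Matrix.mul_neg, ← Matrix.mul_assoc, transpose_mul_residual_eq_zero M hX,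
      Matrix.zero_mul, neg_zero]
  rw [gradg_eq_residual_add, frobSq_add_mul_of_orthogonal hX hR, frobSq_neg, frobSq_smul]
  ring

theorem frobSq_residual_diag_le (hX : Xᵀ * X = 1) :
    frobSq (M * X - X * diagonal (Xᵀ * M * X).diag) ≤ 5 * frobSq (gradg M X) := by
  set A := Xᵀ * M * X
  have hsplit : M * X - X * diagonal A.diag = (M * X - X * A) + X * (A - diagonal A.diag) := by
    rw [Matrix.mul_sub, sub_add_sub_cancel]
  have hR : frobSq (M * X - X * A) ≤ frobSq ((M * X - X * A) * Nr r) :=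
    frobSq_le_frobSq_mul_diagonal one_le_abs_Nr_weight _
  have hoff : frobSq (A - diagonal A.diag) ≤ frobSq (A * Nr r - Nr r * A) :=
    frobSq_sub_diagonal_diag_le Nr_weight_pairwise A
  rw [hsplit, frobSq_add_mul_of_orthogonal hX (transpose_mul_residual_eq_zero M hX)]
  have := frobSq_gradg M hX
  linarith [frobSq_nonneg ((M * X - X * A) * Nr r), frobSq_nonneg (A * Nr r - Nr r * A)]

end Gradient

theorem transpose_mul_mul_apply_self {N r : ℕ} (M : Matrix (Fin N) (Fin N) ℝ)
    (X : Matrix (Fin N) (Fin r) ℝ) (j : Fin r) :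
    (Xᵀ * M * X) j j = (fun i => X i j) ⬝ᵥ (M *ᵥ fun i => X i j) := by
  simp only [mul_apply, transpose_apply, dotProduct, mulVec, sum_mul, mul_sum]
  rw [sum_comm]
  exact sum_congr rfl fun _ _ => sum_congr rfl fun _ _ => by ring

theorem diagonal_mul_sub_mul_diagonal_apply {m n : Type*} [Fintype m] [Fintype n]
    [DecidableEq m] [DecidableEq n] (lam : m → ℝ) (X : Matrix m n ℝ) (ρ : n → ℝ) (i : m) (j : n) :
    (diagonal lam * X - X * diagonal ρ) i j = (lam i - ρ j) * X i j := by
  rw [Matrix.sub_apply, diagonal_mul, mul_diagonal]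
  ring

section Gap

variable {N r : ℕ} {lam : Fin N → ℝ}

theorem dmin_set_finite (lam : Fin N → ℝ) (r : ℕ) :
    {d : ℝ | ∃ s j : Fin N, (s : ℕ) < (j : ℕ) ∧ (j : ℕ) ≤ r ∧ d = lam s - lam j}.Finite :=
  (Set.finite_range fun p : Fin N × Fin N => lam p.1 - lam p.2).subset
    (by rintro _ ⟨s, j, -, -, rfl⟩; exact ⟨(s, j), rfl⟩)

theorem dmin_le {s j : Fin N} (hsj : (s : ℕ) < j) (hj : (j : ℕ) ≤ r) :
    dmin lam r ≤ lam s - lam j :=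
  csInf_le (dmin_set_finite lam r).bddBelow ⟨s, j, hsj, hj, rfl⟩

theorem dmin_pos (hr : 1 ≤ r) (hrN : r < N)
    (hstrict : ∀ s j : Fin N, (s : ℕ) < (j : ℕ) → (j : ℕ) ≤ r → lam j < lam s) :
    0 < dmin lam r := by
  have hne :
      {d : ℝ | ∃ s j : Fin N, (s : ℕ) < (j : ℕ) ∧ (j : ℕ) ≤ r ∧ d = lam s - lam j}.Nonempty :=
    ⟨_, ⟨0, by omega⟩, ⟨r, hrN⟩, hr, le_rfl, rfl⟩
  obtain ⟨s, j, hsj, hj, hd⟩ := hne.csInf_mem (dmin_set_finite lam r)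
  rw [dmin, hd, sub_pos]
  exact hstrict s j hsj hj

theorem dmin_le_abs_sub (hmono : ∀ s j : Fin N, r ≤ (s : ℕ) → s ≤ j → lam j ≤ lam s)
    {i j : Fin N} (hj : (j : ℕ) < r) (hij : i ≠ j) : dmin lam r ≤ |lam i - lam j| := by
  rcases lt_trichotomy (i : ℕ) j with hlt | heq | hgt
  · exact (dmin_le hlt hj.le).trans (le_abs_self _)
  · exact absurd (Fin.ext heq) hij
  rw [abs_sub_comm]
  refine le_trans ?_ (le_abs_self _)
  rcases le_or_gt (i : ℕ) r with hir | hri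
  · exact dmin_le hgt hir
  · have hrN : r < N := hri.trans i.isLt
    have : lam i ≤ lam ⟨r, hrN⟩ := hmono _ i le_rfl (Fin.mk_le_of_le_val hri.le)
    linarith [dmin_le (lam := lam) (s := j) (j := ⟨r, hrN⟩) hj le_rfl]

end Gap

theorem half_le_abs_sub_of_abs_sub_le {ρ a b d : ℝ} (hnear : |ρ - a| ≤ |ρ - b|)
    (hd : d ≤ |b - a|) : d / 2 ≤ |b - ρ| := by
  have := abs_sub_le b ρ a
  rw [abs_sub_comm ρ b] at hnear
  linarith

section UnitVector

variable {ι : Type*} [Fintype ι] [DecidableEq ι]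

theorem sum_sub_sign_ite_sq_le {x : ι → ℝ} (hx : ∑ i, x i ^ 2 = 1) (k : ι) :
    ∑ i, (x i - if i = k then (if 0 ≤ x k then 1 else -1) else 0) ^ 2
      ≤ 2 * ∑ i ∈ univ.erase k, x i ^ 2 := by
  rw [← add_sum_erase _ _ (mem_univ k)] at hx ⊢
  rw [if_pos rfl, sum_congr rfl fun i hi => by rw [if_neg (ne_of_mem_erase hi), sub_zero]]
  have hk : x k ^ 2 ≤ 1 := by
    linarith [sum_nonneg fun i (_ : i ∈ univ.erase k) => sq_nonneg (x i)]
  split_ifs <;> nlinarith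

theorem sq_mul_sum_erase_sq_le (x c : ι → ℝ) (k : ι) {δ : ℝ} (hδ : 0 ≤ δ)
    (hc : ∀ i ≠ k, δ ≤ |c i|) : δ ^ 2 * ∑ i ∈ univ.erase k, x i ^ 2 ≤ ∑ i, (c i * x i) ^ 2 := by
  rw [mul_sum]
  refine (sum_le_sum fun i hi => ?_).trans
    (sum_le_sum_of_subset_of_nonneg (erase_subset k univ) fun i _ _ => sq_nonneg _)
  rw [mul_pow, ← sq_abs (c i)]
  exact mul_le_mul_of_nonneg_right (pow_le_pow_left₀ hδ (hc i (ne_of_mem_erase hi)) 2)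
    (sq_nonneg _)

end UnitVector

theorem dmin_sq_mul_sum_sub_sign_ite_sq_le {N r : ℕ} {lam : Fin N → ℝ}
    (hmono : ∀ s j : Fin N, r ≤ (s : ℕ) → s ≤ j → lam j ≤ lam s) (hd : 0 ≤ dmin lam r)
    {x : Fin N → ℝ} (hx : ∑ i, x i ^ 2 = 1) {k : Fin N} (hk : (k : ℕ) < r) {ρ : ℝ}
    (hnear : ∀ n, |ρ - lam k| ≤ |ρ - lam n|) :
    dmin lam r ^ 2 * ∑ i, (x i - if i = k then (if 0 ≤ x k then 1 else -1) else 0) ^ 2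
      ≤ 8 * ∑ i, ((lam i - ρ) * x i) ^ 2 := by
  have hgap : ∀ i ≠ k, dmin lam r / 2 ≤ |lam i - ρ| := fun i hi =>
    half_le_abs_sub_of_abs_sub_le (hnear i) (dmin_le_abs_sub hmono hk hi)
  have := sq_mul_sum_erase_sq_le x (fun i => lam i - ρ) k (by positivity) hgap
  have := sum_sub_sign_ite_sq_le hx k
  nlinarith [sq_nonneg (dmin lam r)]

/-- Lemma 2, part (23): let `M = diag(λ₁,…,λ_N)` with
`λ₁ > ⋯ > λ_r > λ_{r+1} ≥ ⋯ ≥ λ_N ≥ 0`, and let `X ∈ St(N,r)` with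
`‖grad g(X)‖_F ≤ ε` be such that for each column `x_j` the eigenvalue of `M`
closest to `x_jᵀ M x_j` is `λ_j`. Then there is a sign matrix `S = diag(±1)`
with `‖X − X_Ω S‖_F ≤ 12 ε / d_min`, where `X_Ω = [e₁,…,e_r]`. -/
theorem stmt_13 {N r : ℕ} (hr : 1 ≤ r) (hrN : r < N)
    (lam : Fin N → ℝ)
    (hstrict : ∀ s j : Fin N, (s : ℕ) < (j : ℕ) → (j : ℕ) ≤ r → lam j < lam s)
    (hmono : ∀ s j : Fin N, r ≤ (s : ℕ) → s ≤ j → lam j ≤ lam s)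
    (X : Matrix (Fin N) (Fin r) ℝ) (hX : Xᵀ * X = 1) (ε : ℝ)
    (hgrad : frob (gradg (Matrix.diagonal lam) X) ≤ ε)
    (hclosest : ∀ (j : Fin r) (n : Fin N),
      |(fun i => X i j) ⬝ᵥ (Matrix.diagonal lam *ᵥ fun i => X i j) - lam (Fin.castLE hrN.le j)| ≤
        |(fun i => X i j) ⬝ᵥ (Matrix.diagonal lam *ᵥ fun i => X i j) - lam n|) :
    ∃ S : Fin r → ℝ, (∀ j, S j = 1 ∨ S j = -1) ∧
      frob (X - Matrix.of fun (i : Fin N) (j : Fin r) =>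
        if (i : ℕ) = (j : ℕ) then S j else 0) ≤ 12 * ε / dmin lam r := by
  set d := dmin lam r
  have hd : 0 < d := dmin_pos hr hrN hstrict
  have hε : 0 ≤ ε := (Real.sqrt_nonneg _).trans hgrad
  set E := diagonal lam * X - X * diagonal (Xᵀ * diagonal lam * X).diag
  have hE : frobSq E ≤ 5 * ε ^ 2 :=
    (frobSq_residual_diag_le _ hX).trans (by linarith [frobSq_le_sq_of_frob_le hgrad])
  set S : Fin r → ℝ := fun j => if 0 ≤ X (Fin.castLE hrN.le j) j then 1 else -1
  have hcol (j : Fin r) : d ^ 2 * ∑ i, (X i j - if (i : ℕ) = (j : ℕ) then S j else 0) ^ 2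
      ≤ 8 * ∑ i, E i j ^ 2 := by
    have hunit : ∑ i, X i j ^ 2 = 1 := by simpa [mul_apply, sq] using congrFun (congrFun hX j) j
    have hk (i : Fin N) : (i : ℕ) = (j : ℕ) ↔ i = Fin.castLE hrN.le j := by simp [Fin.ext_iff]
    simp only [E, diagonal_mul_sub_mul_diagonal_apply, diag_apply, transpose_mul_mul_apply_self,
      hk]
    exact dmin_sq_mul_sum_sub_sign_ite_sq_le hmono hd.le hunit j.isLt (hclosest j)
  refine ⟨S, fun j => by unfold S; split_ifs <;> simp, frob_le_of_frobSq_le (by positivity) ?_⟩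
  rw [div_pow, le_div_iff₀ (by positivity), mul_comm, frobSq_eq_sum_col, mul_sum]
  calc ∑ j, d ^ 2 * ∑ i, (X i j - if (i : ℕ) = (j : ℕ) then S j else 0) ^ 2
      ≤ ∑ j, 8 * ∑ i, E i j ^ 2 := sum_le_sum fun j _ => hcol j
    _ = 8 * frobSq E := by rw [frobSq_eq_sum_col, mul_sum]
    _ ≤ (12 * ε) ^ 2 := by nlinarith
end

section
/- (Tangent-space projection perturbation bound, used in the proof of Theorem 3.) For Z ∈ St(N,r) define the tangent projection P_{T_Z}(U) = U − (1/2) Z (Zᵀ U + Uᵀ Z). Let X, X_Ω ∈ St(N,r) and let U ∈ ℝ^{N×r} satisfy Xᵀ U + Uᵀ X = 0 (i.e., U is tangent at X). Then ‖P_{T_{X_Ω}}(U)‖_F ≥ (1 − 2‖X − X_Ω‖_F) ‖U‖_F. -/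
open Matrix

attribute [local instance] Matrix.frobeniusNormedAddCommGroup Matrix.frobeniusNormedSpace

lemma frob_eq_norm {m n : ℕ} (A : Matrix (Fin m) (Fin n) ℝ) : frob A = ‖A‖ := by
  rw [frob, Matrix.frobenius_norm_def, Real.sqrt_eq_rpow]
  congr 1
  simp [Real.rpow_two, sq_abs]

lemma frob_trace {m n : ℕ} (A : Matrix (Fin m) (Fin n) ℝ) :
    frob A = Real.sqrt (Aᵀ * A).trace := by
  rw [frob, Matrix.trace, Finset.sum_comm]
  congr 1
  simp [Matrix.diag, Matrix.mul_apply, sq]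

lemma frob_isometry {m n k : ℕ} (Q : Matrix (Fin m) (Fin n) ℝ) (hQ : Qᵀ * Q = 1)
    (A : Matrix (Fin n) (Fin k) ℝ) : frob (Q * A) = frob A := by
  rw [frob_trace, frob_trace]
  congr 2
  rw [Matrix.transpose_mul]
  rw [Matrix.mul_assoc Aᵀ, ← Matrix.mul_assoc Qᵀ, hQ, Matrix.one_mul]

/-- tangent-space projection perturbation bound: for
`X, X_Ω ∈ St(N,r)` and `U` tangent at `X` (i.e. `Xᵀ U + Uᵀ X = 0`), the projection
`P_{T_{X_Ω}}(U) = U − (1/2) X_Ω (X_Ωᵀ U + Uᵀ X_Ω)` satisfies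
`‖P_{T_{X_Ω}}(U)‖_F ≥ (1 − 2 ‖X − X_Ω‖_F) ‖U‖_F`. -/
theorem stmt_18 {N r : ℕ} (X XΩ : Matrix (Fin N) (Fin r) ℝ)
    (hX : Xᵀ * X = 1) (hXΩ : XΩᵀ * XΩ = 1)
    (U : Matrix (Fin N) (Fin r) ℝ) (hU : Xᵀ * U + Uᵀ * X = 0) :
    frob (U - (1/2 : ℝ) • (XΩ * (XΩᵀ * U + Uᵀ * XΩ))) ≥
      (1 - 2 * frob (X - XΩ)) * frob U := by
  set D : Matrix (Fin r) (Fin r) ℝ := XΩᵀ * U + Uᵀ * XΩ with hD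
  have hDdecomp : D = (XΩ - X)ᵀ * U + Uᵀ * (XΩ - X) := by
    have : (XΩ - X)ᵀ * U + Uᵀ * (XΩ - X) = (XΩᵀ * U + Uᵀ * XΩ) - (Xᵀ * U + Uᵀ * X) := by
      rw [Matrix.transpose_sub, Matrix.sub_mul, Matrix.mul_sub]; abel
    rw [this, hU, sub_zero, hD]
  -- bound the correction term
  have hfrobD : frob ((1/2 : ℝ) • (XΩ * D)) ≤ frob (X - XΩ) * frob U := by
    rw [frob_eq_norm, norm_smul]
    have h1 : ‖XΩ * D‖ = ‖D‖ := by
      rw [← frob_eq_norm, ← frob_eq_norm, frob_isometry XΩ hXΩ]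
    rw [h1]
    have h2 : ‖D‖ ≤ 2 * (‖X - XΩ‖ * ‖U‖) := by
      calc ‖D‖ ≤ ‖(XΩ - X)ᵀ * U‖ + ‖Uᵀ * (XΩ - X)‖ := by
            rw [hDdecomp]; exact norm_add_le _ _
        _ ≤ ‖(XΩ - X)ᵀ‖ * ‖U‖ + ‖Uᵀ‖ * ‖XΩ - X‖ := by
            gcongr <;> exact Matrix.frobenius_norm_mul _ _
        _ = ‖X - XΩ‖ * ‖U‖ + ‖U‖ * ‖X - XΩ‖ := by
            rw [Matrix.frobenius_norm_transpose, Matrix.frobenius_norm_transpose,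
              norm_sub_rev XΩ X]
        _ = 2 * (‖X - XΩ‖ * ‖U‖) := by ring
    calc ‖(1/2 : ℝ)‖ * ‖D‖ ≤ ‖(1/2 : ℝ)‖ * (2 * (‖X - XΩ‖ * ‖U‖)) :=
          mul_le_mul_of_nonneg_left h2 (norm_nonneg _)
      _ = ‖X - XΩ‖ * ‖U‖ := by
          rw [Real.norm_eq_abs, abs_of_nonneg (by norm_num : (0:ℝ) ≤ 1/2)]; ring
      _ = frob (X - XΩ) * frob U := by rw [frob_eq_norm, frob_eq_norm]
  have hrev : frob U - frob ((1/2 : ℝ) • (XΩ * D)) ≤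
      frob (U - (1/2 : ℝ) • (XΩ * D)) := by
    rw [frob_eq_norm, frob_eq_norm, frob_eq_norm]
    exact norm_sub_norm_le _ _
  have hnn : 0 ≤ frob (X - XΩ) * frob U := by
    apply mul_nonneg <;> exact Real.sqrt_nonneg _
  nlinarith [hrev, hfrobD, hnn]
end
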